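/- arXiv:2603.14502 — 6 statements merged into one kernel-verified Lean document; each statement's English description precedes it below -/
import Mathlib

section
/- Fix T > 0 and α₀ ∈ (0,2). There exists a constant c > 0 depending only on d, T, α₀ such that for all α ∈ [α₀, 2], all t ∈ (0, T], and all x ∈ ℝ^d, the Gaussian heat kernel satisfies p(t,x) ≤ c · t^{(α-2)/2} · min(t^{-d/α}, t/|x|^{d+α}). -/
open scoped ENNReal

lemma aux_poly_exp (N u β : ℝ) (hN : 1 ≤ N) (hu : 0 ≤ u) (hβ0 : 0 ≤ β) (hβN : β ≤ N) :
    u ^ β * Real.exp (-u) ≤ 1 + N ^ N := by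
  have hNN : (0:ℝ) ≤ N ^ N := Real.rpow_nonneg (by linarith) N
  rcases le_total u 1 with h1 | h1
  · have h2 : u ^ β ≤ 1 := Real.rpow_le_one hu h1 hβ0
    have h3 : Real.exp (-u) ≤ 1 := Real.exp_le_one_iff.2 (by linarith)
    nlinarith [Real.exp_pos (-u), Real.rpow_nonneg hu β]
  · have hNpos : (0:ℝ) < N := by linarith
    have h2 : u ^ β ≤ u ^ N := Real.rpow_le_rpow_of_exponent_le h1 hβN
    have hle : u ≤ N * Real.exp (u / N) := by
      have := Real.add_one_le_exp (u / N)
      have h4 : u / N ≤ Real.exp (u / N) := by linarith [Real.exp_pos (u/N)]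
      calc u = N * (u / N) := by field_simp
        _ ≤ N * Real.exp (u / N) := by nlinarith
    have h5 : u ^ N ≤ (N * Real.exp (u / N)) ^ N :=
      Real.rpow_le_rpow hu hle (by linarith)
    have h6 : (N * Real.exp (u / N)) ^ N = N ^ N * Real.exp u := by
      rw [Real.mul_rpow (by linarith) (Real.exp_pos _).le]
      congr 1
      rw [Real.rpow_def_of_pos (Real.exp_pos _), Real.log_exp]
      congr 1; field_simp
    have h7 : u ^ β * Real.exp (-u) ≤ N ^ N := by
      calc u ^ β * Real.exp (-u) ≤ (N ^ N * Real.exp u) * Real.exp (-u) := by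
            have := (Real.exp_pos (-u)).le
            nlinarith [h2.trans (h5.trans_eq h6)]
        _ = N ^ N := by rw [mul_assoc, ← Real.exp_add]; simp
    linarith

lemma branchA_real (d : ℕ) (T α₀ α t s : ℝ)
    (hα₀ : 0 < α₀) (hαl : α₀ ≤ α) (hαu : α ≤ 2)
    (ht : 0 < t) (htT : t ≤ T) (hs : s ≤ 0) :
    (4 * Real.pi * t) ^ (-(d : ℝ) / 2) * Real.exp s ≤
      ((4 * Real.pi) ^ (-(d : ℝ) / 2) * max 1 T ^ (1 + (d : ℝ) / α₀)) *
        t ^ ((α - 2) / 2) * t ^ (-(d : ℝ) / α) := by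
  have hα : 0 < α := lt_of_lt_of_le hα₀ hαl
  have hK : (0:ℝ) < (4 * Real.pi) ^ (-(d : ℝ) / 2) := by positivity
  have hKt : (4 * Real.pi * t) ^ (-(d : ℝ) / 2)
      = (4 * Real.pi) ^ (-(d : ℝ) / 2) * t ^ (-(d : ℝ) / 2) :=
    Real.mul_rpow (by positivity) ht.le
  have hexp : Real.exp s ≤ 1 := Real.exp_le_one_iff.2 hs
  set e : ℝ := -(d : ℝ) / 2 - (α - 2) / 2 + (d : ℝ) / α with he_def
  have h1 : (d : ℝ) / 2 ≤ (d : ℝ) / α :=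
    div_le_div_of_nonneg_left (Nat.cast_nonneg d) hα hαu
  have he0 : 0 ≤ e := by rw [he_def]; linarith
  have h2 : (d : ℝ) / α ≤ (d : ℝ) / α₀ :=
    div_le_div_of_nonneg_left (Nat.cast_nonneg d) hα₀ hαl
  have h3 : (0:ℝ) ≤ (d : ℝ) / 2 := by positivity
  have heE : e ≤ 1 + (d : ℝ) / α₀ := by rw [he_def]; linarith
  have hte : t ^ e ≤ max 1 T ^ (1 + (d : ℝ) / α₀) := by
    calc t ^ e ≤ max 1 T ^ e :=
          Real.rpow_le_rpow ht.le (htT.trans (le_max_right 1 T)) he0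
      _ ≤ max 1 T ^ (1 + (d : ℝ) / α₀) :=
          Real.rpow_le_rpow_of_exponent_le (le_max_left 1 T) heE
  have hsplit : t ^ (-(d : ℝ) / 2) = t ^ e * (t ^ ((α - 2) / 2) * t ^ (-(d : ℝ) / α)) := by
    rw [← Real.rpow_add ht, ← Real.rpow_add ht]
    congr 1
    rw [he_def]; ring
  calc (4 * Real.pi * t) ^ (-(d : ℝ) / 2) * Real.exp s
      ≤ (4 * Real.pi) ^ (-(d : ℝ) / 2) * t ^ (-(d : ℝ) / 2) := by
        rw [hKt]
        exact mul_le_of_le_one_right (by positivity) hexp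
    _ = ((4 * Real.pi) ^ (-(d : ℝ) / 2) * t ^ e) *
          (t ^ ((α - 2) / 2) * t ^ (-(d : ℝ) / α)) := by rw [hsplit]; ring
    _ ≤ ((4 * Real.pi) ^ (-(d : ℝ) / 2) * max 1 T ^ (1 + (d : ℝ) / α₀)) *
          (t ^ ((α - 2) / 2) * t ^ (-(d : ℝ) / α)) := by
        gcongr
    _ = ((4 * Real.pi) ^ (-(d : ℝ) / 2) * max 1 T ^ (1 + (d : ℝ) / α₀)) *
          t ^ ((α - 2) / 2) * t ^ (-(d : ℝ) / α) := by ring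

lemma branchB_real (d : ℕ) (α t r : ℝ) (hα : 0 < α) (hαu : α ≤ 2) (ht : 0 < t) (hr : 0 < r) :
    (4 * Real.pi * t) ^ (-(d : ℝ) / 2) * Real.exp (-(r ^ 2) / (4 * t)) ≤
      ((4 * Real.pi) ^ (-(d : ℝ) / 2) * 4 ^ (((d : ℝ) + 2) / 2) *
          (1 + ((d : ℝ) + 2) ^ ((d : ℝ) + 2))) *
        t ^ ((α - 2) / 2) * (t / r ^ ((d : ℝ) + α)) := by
  have hd : (0:ℝ) ≤ d := Nat.cast_nonneg d
  have hrβ : 0 < r ^ ((d : ℝ) + α) := Real.rpow_pos_of_pos hr _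
  rw [mul_div_assoc' _ t _, le_div_iff₀ hrβ]
  set u : ℝ := r ^ 2 / (4 * t) with hu_def
  have hu : 0 < u := by rw [hu_def]; positivity
  have hr2 : r ^ 2 = 4 * t * u := by rw [hu_def]; field_simp
  have hrβ_eq : r ^ ((d : ℝ) + α)
      = 4 ^ (((d : ℝ) + α) / 2) * t ^ (((d : ℝ) + α) / 2) * u ^ (((d : ℝ) + α) / 2) := by
    have h1 : r ^ ((d : ℝ) + α) = (r ^ 2) ^ (((d : ℝ) + α) / 2) := by
      rw [← Real.rpow_natCast r 2, ← Real.rpow_mul hr.le]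
      congr 1; ring
    rw [h1, hr2, Real.mul_rpow (by positivity) hu.le,
      Real.mul_rpow (by norm_num) ht.le]
  have hK : (4 * Real.pi * t) ^ (-(d : ℝ) / 2)
      = (4 * Real.pi) ^ (-(d : ℝ) / 2) * t ^ (-(d : ℝ) / 2) :=
    Real.mul_rpow (by positivity) ht.le
  have hexp : Real.exp (-(r ^ 2) / (4 * t)) = Real.exp (-u) := by
    rw [hu_def, neg_div]
  have htsplit : t ^ (-(d : ℝ) / 2) * t ^ (((d : ℝ) + α) / 2) = t ^ ((α - 2) / 2) * t := by
    have h : t ^ ((α - 2) / 2) * t = t ^ ((α - 2) / 2 + 1) := by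
      rw [Real.rpow_add ht, Real.rpow_one]
    rw [← Real.rpow_add ht, h]
    congr 1; ring
  have hN1 : (1:ℝ) ≤ (d : ℝ) + 2 := by linarith
  have hpoly : u ^ (((d : ℝ) + α) / 2) * Real.exp (-u) ≤ 1 + ((d : ℝ) + 2) ^ ((d : ℝ) + 2) :=
    aux_poly_exp _ _ _ hN1 hu.le (by positivity) (by linarith)
  have h4 : (4:ℝ) ^ (((d : ℝ) + α) / 2) ≤ 4 ^ (((d : ℝ) + 2) / 2) :=
    Real.rpow_le_rpow_of_exponent_le (by norm_num) (by linarith)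
  calc (4 * Real.pi * t) ^ (-(d : ℝ) / 2) * Real.exp (-(r ^ 2) / (4 * t)) * r ^ ((d : ℝ) + α)
      = ((4 * Real.pi) ^ (-(d : ℝ) / 2) * 4 ^ (((d : ℝ) + α) / 2)) *
          (t ^ (-(d : ℝ) / 2) * t ^ (((d : ℝ) + α) / 2)) *
          (u ^ (((d : ℝ) + α) / 2) * Real.exp (-u)) := by
        rw [hK, hexp, hrβ_eq]; ring
    _ = ((4 * Real.pi) ^ (-(d : ℝ) / 2) * 4 ^ (((d : ℝ) + α) / 2)) *
          (t ^ ((α - 2) / 2) * t) *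
          (u ^ (((d : ℝ) + α) / 2) * Real.exp (-u)) := by rw [htsplit]
    _ ≤ ((4 * Real.pi) ^ (-(d : ℝ) / 2) * 4 ^ (((d : ℝ) + 2) / 2)) *
          (t ^ ((α - 2) / 2) * t) *
          (1 + ((d : ℝ) + 2) ^ ((d : ℝ) + 2)) := by
        gcongr
    _ = ((4 * Real.pi) ^ (-(d : ℝ) / 2) * 4 ^ (((d : ℝ) + 2) / 2) *
          (1 + ((d : ℝ) + 2) ^ ((d : ℝ) + 2))) * t ^ ((α - 2) / 2) * t := by ring



/-- The `d`-dimensional Gaussian heat kernel `p(t,x) = (4πt)^{-d/2} exp(-|x|²/(4t))`. -/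
noncomputable def heatKernel (d : ℕ) (t : ℝ) (x : EuclideanSpace ℝ (Fin d)) : ℝ :=
  (4 * Real.pi * t) ^ (-(d : ℝ) / 2) * Real.exp (-(‖x‖ ^ 2) / (4 * t))

/-- For `T > 0`, `α₀ ∈ (0,2)`, there is `c > 0` (depending only on `d, T, α₀`)
such that for all `α ∈ [α₀,2]`, `t ∈ (0,T]`, `x ∈ ℝ^d`:
`p(t,x) ≤ c · t^{(α-2)/2} · min(t^{-d/α}, t/|x|^{d+α})`. -/
theorem stmt_3 (d : ℕ) (T α₀ : ℝ) (hT : 0 < T) (hα₀ : α₀ ∈ Set.Ioo (0 : ℝ) 2) :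
    ∃ c : ℝ, 0 < c ∧ ∀ α ∈ Set.Icc α₀ 2, ∀ t ∈ Set.Ioc (0 : ℝ) T,
      ∀ x : EuclideanSpace ℝ (Fin d),
        ENNReal.ofReal (heatKernel d t x) ≤
          ENNReal.ofReal (c * t ^ ((α - 2) / 2)) *
            min (ENNReal.ofReal t ^ (-(d : ℝ) / α))
              (ENNReal.ofReal t / ENNReal.ofReal ‖x‖ ^ ((d : ℝ) + α)) := by
  obtain ⟨hα₀0, hα₀2⟩ := hα₀
  set cA : ℝ := (4 * Real.pi) ^ (-(d : ℝ) / 2) * max 1 T ^ (1 + (d : ℝ) / α₀) with hcA_def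
  set cB : ℝ := (4 * Real.pi) ^ (-(d : ℝ) / 2) * 4 ^ (((d : ℝ) + 2) / 2) *
      (1 + ((d : ℝ) + 2) ^ ((d : ℝ) + 2)) with hcB_def
  have hcA : 0 < cA := by rw [hcA_def]; positivity
  have hcB : 0 < cB := by rw [hcB_def]; positivity
  refine ⟨cA + cB, by positivity, ?_⟩
  rintro α ⟨hαl, hαu⟩ t ⟨ht, htT⟩ x
  have hα : 0 < α := lt_of_lt_of_le hα₀0 hαl
  have hct : 0 ≤ (cA + cB) * t ^ ((α - 2) / 2) :=
    mul_nonneg (by positivity) (Real.rpow_nonneg ht.le _)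
  have htp : 0 ≤ t ^ ((α - 2) / 2) := Real.rpow_nonneg ht.le _
  have hA : heatKernel d t x ≤ (cA + cB) * t ^ ((α - 2) / 2) * t ^ (-(d : ℝ) / α) := by
    have h1 := branchA_real d T α₀ α t (-(‖x‖ ^ 2) / (4 * t)) hα₀0 hαl hαu ht htT
      (div_nonpos_of_nonpos_of_nonneg (neg_nonpos_of_nonneg (by positivity)) (by positivity))
    calc heatKernel d t x ≤ cA * t ^ ((α - 2) / 2) * t ^ (-(d : ℝ) / α) := h1
      _ ≤ (cA + cB) * t ^ ((α - 2) / 2) * t ^ (-(d : ℝ) / α) := by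
          gcongr <;>
            first
              | linarith
              | exact Real.rpow_nonneg ht.le _
  rcases min_cases (ENNReal.ofReal t ^ (-(d : ℝ) / α))
      (ENNReal.ofReal t / ENNReal.ofReal ‖x‖ ^ ((d : ℝ) + α)) with ⟨hmin, _⟩ | ⟨hmin, _⟩ <;>
    rw [hmin]
  · rw [ENNReal.ofReal_rpow_of_pos ht, ← ENNReal.ofReal_mul hct]
    exact ENNReal.ofReal_le_ofReal hA
  · by_cases hx : ‖x‖ = 0
    · rw [hx, ENNReal.ofReal_zero, ENNReal.zero_rpow_of_pos (by positivity),
        ENNReal.div_zero (by simp [ENNReal.ofReal_pos, ht] : ENNReal.ofReal t ≠ 0),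
        ENNReal.mul_top]
      · exact le_top
      · simp only [ne_eq, ENNReal.ofReal_eq_zero, not_le]
        exact mul_pos (by linarith) (Real.rpow_pos_of_pos ht _)
    · have hr : 0 < ‖x‖ := lt_of_le_of_ne (norm_nonneg x) (Ne.symm hx)
      have hB : heatKernel d t x ≤
          (cA + cB) * t ^ ((α - 2) / 2) * (t / ‖x‖ ^ ((d : ℝ) + α)) := by
        have h1 := branchB_real d α t ‖x‖ hα hαu ht hr
        calc heatKernel d t x ≤ cB * t ^ ((α - 2) / 2) * (t / ‖x‖ ^ ((d : ℝ) + α)) := h1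
          _ ≤ (cA + cB) * t ^ ((α - 2) / 2) * (t / ‖x‖ ^ ((d : ℝ) + α)) := by
              gcongr <;>
                first
                  | linarith
                  | exact div_nonneg ht.le (Real.rpow_nonneg hr.le _)
      rw [ENNReal.ofReal_rpow_of_pos hr,
        ← ENNReal.ofReal_div_of_pos (Real.rpow_pos_of_pos hr _), ← ENNReal.ofReal_mul hct]
      exact ENNReal.ofReal_le_ofReal hB
end

section
/- Let k ≥ 0, γ₁, γ₂ ∈ (0,∞). For every c₁ > 0, c₂ > 1 there is a constant C > 0 (depending on d, k, γ₂, c₁, c₂) such that for all t > 0 and x, z ∈ ℝ^d with |z| ≤ max(c₁ · t^{(d+k+γ₁)/(γ₁(d+k+γ₂))}, |x|/c₂), one has ϱ^{(k)}_{γ₁,γ₂}(t, x+z) ≤ C · ϱ^{(k)}_{γ₁,γ₂}(t, x). -/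
/-!
Write `β = d + k + γ₂`. If `|z| ≤ |x|/c₂`, then `|x + z| ≥ (1 - 1/c₂)|x|`, so the tail term
`t/|x+z|^β` is at most `(1 - 1/c₂)^{-β}` times `t/|x|^β`. Otherwise `|x| < c₂|z| ≤ c₁c₂ t^θ` with
`θ = (d+k+γ₁)/(γ₁β)`, and `θβ = 1 + (d+k)/γ₁` makes `t/|x|^β ≥ (c₁c₂)^{-β} t^{-(d+k)/γ₁}`, so `ϱ(t, x)`
is comparable to the plateau value `t^{-(d+k)/γ₁}`, which bounds `ϱ(t, x+z)` from above.
-/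

open scoped ENNReal

noncomputable def rho (d : ℕ) (k γ₁ γ₂ t : ℝ) (x : EuclideanSpace ℝ (Fin d)) : ℝ≥0∞ :=
  min (ENNReal.ofReal t ^ (-((d : ℝ) + k) / γ₁))
    (ENNReal.ofReal t / ENNReal.ofReal ‖x‖ ^ ((d : ℝ) + k + γ₂))

theorem one_sub_inv_mul_norm_le_norm_add {E : Type*} [SeminormedAddCommGroup E] {c : ℝ}
    {x z : E} (hz : ‖z‖ ≤ ‖x‖ / c) : (1 - c⁻¹) * ‖x‖ ≤ ‖x + z‖ := by
  have := norm_sub_le_norm_add x z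
  rw [div_eq_inv_mul] at hz
  linarith

theorem ENNReal.min_mul_le_mul_min {K : ℝ≥0∞} (hK : 1 ≤ K) (a b : ℝ≥0∞) :
    min a (K * b) ≤ K * min a b := by
  rw [mul_min]
  exact min_le_min_right _ (le_mul_of_one_le_left' hK)

section rho

variable {d : ℕ} {k γ₁ γ₂ t : ℝ}

theorem rho_le_ofReal_rpow_neg_mul_rho (hβ : 0 < (d : ℝ) + k + γ₂) {m : ℝ} (hm : 0 < m)
    (hm₁ : m ≤ 1) {x y : EuclideanSpace ℝ (Fin d)} (hxy : m * ‖x‖ ≤ ‖y‖) :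
    rho d k γ₁ γ₂ t y ≤ ENNReal.ofReal (m ^ (-((d : ℝ) + k + γ₂))) * rho d k γ₁ γ₂ t x := by
  set β := (d : ℝ) + k + γ₂
  set M := ENNReal.ofReal m ^ β
  have hM₀ : M ≠ 0 := by simp [M, hm, not_lt.mpr hβ.le]
  have hM : M ≠ ∞ := ENNReal.rpow_ne_top_of_nonneg hβ.le ENNReal.ofReal_ne_top
  have hK : ENNReal.ofReal (m ^ (-β)) = M⁻¹ := by
    rw [← ENNReal.ofReal_rpow_of_pos hm, ENNReal.rpow_neg]
  have hMXY : M * ENNReal.ofReal ‖x‖ ^ β ≤ ENNReal.ofReal ‖y‖ ^ β := by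
    rw [← ENNReal.mul_rpow_of_nonneg _ _ hβ.le, ← ENNReal.ofReal_mul hm.le]
    exact ENNReal.rpow_le_rpow (ENNReal.ofReal_le_ofReal hxy) hβ.le
  have htail : ENNReal.ofReal t / ENNReal.ofReal ‖y‖ ^ β
      ≤ ENNReal.ofReal (m ^ (-β)) * (ENNReal.ofReal t / ENNReal.ofReal ‖x‖ ^ β) :=
    calc ENNReal.ofReal t / ENNReal.ofReal ‖y‖ ^ β
        ≤ ENNReal.ofReal t / (M * ENNReal.ofReal ‖x‖ ^ β) := ENNReal.div_le_div_left hMXY _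
      _ = M⁻¹ * (ENNReal.ofReal t / ENNReal.ofReal ‖x‖ ^ β) := by
        rw [div_eq_mul_inv, div_eq_mul_inv, ENNReal.mul_inv (Or.inl hM₀) (Or.inl hM)]
        ring
      _ = _ := by rw [hK]
  have hK₁ : 1 ≤ ENNReal.ofReal (m ^ (-β)) :=
    ENNReal.one_le_ofReal.mpr (Real.one_le_rpow_of_pos_of_le_one_of_nonpos hm hm₁ (by linarith))
  exact (min_le_min_left _ htail).trans (ENNReal.min_mul_le_mul_min hK₁ _ _)

theorem ofReal_rpow_le_mul_rho (h₁ : 0 < γ₁) (hβ : 0 < (d : ℝ) + k + γ₂) (ht : 0 < t) {R : ℝ}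
    {x : EuclideanSpace ℝ (Fin d)}
    (hx : ‖x‖ ≤ R * t ^ (((d : ℝ) + k + γ₁) / (γ₁ * ((d : ℝ) + k + γ₂)))) :
    ENNReal.ofReal t ^ (-((d : ℝ) + k) / γ₁)
      ≤ ENNReal.ofReal (max 1 (R ^ ((d : ℝ) + k + γ₂))) * rho d k γ₁ γ₂ t x := by
  set β := (d : ℝ) + k + γ₂
  set θ := ((d : ℝ) + k + γ₁) / (γ₁ * β)
  set e := -((d : ℝ) + k) / γ₁
  set K := ENNReal.ofReal (max 1 (R ^ β))
  have hθβ : θ * β = 1 - e := by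
    simp only [θ, e]
    field_simp
    ring
  have htθ : 0 < t ^ θ := Real.rpow_pos_of_pos ht _
  have hR : 0 ≤ R := nonneg_of_mul_nonneg_left ((norm_nonneg x).trans hx) htθ
  have hreal : t ^ e * ‖x‖ ^ β ≤ R ^ β * t :=
    calc t ^ e * ‖x‖ ^ β ≤ t ^ e * (R * t ^ θ) ^ β := by gcongr
      _ = R ^ β * (t ^ e * t ^ (θ * β)) := by
        rw [Real.mul_rpow hR htθ.le, ← Real.rpow_mul ht.le]
        ring
      _ = R ^ β * t := by rw [← Real.rpow_add ht, hθβ, add_sub_cancel, Real.rpow_one]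
  have hK₁ : 1 ≤ K := ENNReal.one_le_ofReal.mpr (le_max_left _ _)
  have hK₀ : K * ENNReal.ofReal t ≠ 0 := by simp [K, ht]
  have hX : ENNReal.ofReal ‖x‖ ^ β ≠ ∞ :=
    ENNReal.rpow_ne_top_of_nonneg hβ.le ENNReal.ofReal_ne_top
  rw [rho, mul_min]
  refine le_min (le_mul_of_one_le_left' hK₁) ?_
  rw [← mul_div_assoc, ENNReal.le_div_iff_mul_le (Or.inr hK₀) (Or.inl hX),
    ENNReal.ofReal_rpow_of_pos ht, ENNReal.ofReal_rpow_of_nonneg (norm_nonneg x) hβ.le,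
    ← ENNReal.ofReal_mul (Real.rpow_nonneg ht.le _)]
  calc ENNReal.ofReal (t ^ e * ‖x‖ ^ β) ≤ ENNReal.ofReal (R ^ β * t) :=
        ENNReal.ofReal_le_ofReal hreal
    _ ≤ K * ENNReal.ofReal t := by
      rw [ENNReal.ofReal_mul (Real.rpow_nonneg hR _)]
      exact mul_le_mul_left (ENNReal.ofReal_le_ofReal (le_max_right _ _)) _

end rho

theorem stmt_5_general (d : ℕ) (k γ₁ γ₂ : ℝ) (hk : 0 ≤ k)
    (h₁ : 0 < γ₁) (h₂ : 0 < γ₂) (c₁ c₂ : ℝ) (hc₂ : 1 < c₂) :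
    ∃ C : ℝ, 0 < C ∧ ∀ t : ℝ, 0 < t → ∀ x z : EuclideanSpace ℝ (Fin d),
      ‖z‖ ≤ max (c₁ * t ^ (((d : ℝ) + k + γ₁) / (γ₁ * ((d : ℝ) + k + γ₂)))) (‖x‖ / c₂) →
        rho d k γ₁ γ₂ t (x + z) ≤ ENNReal.ofReal C * rho d k γ₁ γ₂ t x := by
  set β := (d : ℝ) + k + γ₂
  have hβ : 0 < β := by positivity
  have hm : 0 < 1 - c₂⁻¹ := sub_pos.mpr (inv_lt_one_of_one_lt₀ hc₂)
  have hm₁ : 1 - c₂⁻¹ ≤ 1 := by linarith [inv_pos.mpr (zero_lt_one.trans hc₂)]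
  refine ⟨max ((1 - c₂⁻¹) ^ (-β)) (max 1 ((c₁ * c₂) ^ β)),
    lt_max_of_lt_right (lt_max_of_lt_left one_pos), fun t ht x z hz => ?_⟩
  rcases le_or_gt ‖z‖ (‖x‖ / c₂) with hsmall | hlarge
  · calc rho d k γ₁ γ₂ t (x + z)
        ≤ ENNReal.ofReal ((1 - c₂⁻¹) ^ (-β)) * rho d k γ₁ γ₂ t x :=
          rho_le_ofReal_rpow_neg_mul_rho hβ hm hm₁ (one_sub_inv_mul_norm_le_norm_add hsmall)
      _ ≤ _ := mul_le_mul_left (ENNReal.ofReal_le_ofReal (le_max_left _ _)) _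
  · have hz₁ : ‖z‖ ≤ c₁ * t ^ (((d : ℝ) + k + γ₁) / (γ₁ * β)) :=
      (le_max_iff.mp hz).resolve_right (not_le.mpr hlarge)
    have hx : ‖x‖ ≤ c₁ * c₂ * t ^ (((d : ℝ) + k + γ₁) / (γ₁ * β)) := by
      rw [div_lt_iff₀ (zero_lt_one.trans hc₂)] at hlarge
      nlinarith
    calc rho d k γ₁ γ₂ t (x + z) ≤ ENNReal.ofReal t ^ (-((d : ℝ) + k) / γ₁) := min_le_left _ _
      _ ≤ ENNReal.ofReal (max (1 : ℝ) ((c₁ * c₂) ^ β)) * rho d k γ₁ γ₂ t x :=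
          ofReal_rpow_le_mul_rho h₁ hβ ht hx
      _ ≤ _ := mul_le_mul_left (ENNReal.ofReal_le_ofReal (le_max_right _ _)) _

/-- If `|z| ≤ max(c₁ t^{(d+k+γ₁)/(γ₁(d+k+γ₂))}, |x|/c₂)` with `c₁ > 0`, `c₂ > 1`, then
`ϱ^{(k)}_{γ₁,γ₂}(t, x+z) ≤ C · ϱ^{(k)}_{γ₁,γ₂}(t, x)`. -/
theorem stmt_5 (d : ℕ) (hd : 1 ≤ d) (k γ₁ γ₂ : ℝ) (hk : 0 ≤ k)
    (h₁ : 0 < γ₁) (h₂ : 0 < γ₂) (c₁ c₂ : ℝ) (hc₁ : 0 < c₁) (hc₂ : 1 < c₂) :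
    ∃ C : ℝ, 0 < C ∧ ∀ t : ℝ, 0 < t → ∀ x z : EuclideanSpace ℝ (Fin d),
      ‖z‖ ≤ max (c₁ * t ^ (((d : ℝ) + k + γ₁) / (γ₁ * ((d : ℝ) + k + γ₂)))) (‖x‖ / c₂) →
        rho d k γ₁ γ₂ t (x + z) ≤ ENNReal.ofReal C * rho d k γ₁ γ₂ t x :=
  stmt_5_general d k γ₁ γ₂ hk h₁ h₂ c₁ c₂ hc₂
end

section
/- Let k ∈ ℕ₀ and γᵢ ∈ [α₀, 2] for i = 1,2,3,4, with some α₀ ∈ (0,2). There is a constant c = c(d, α₀, k) > 0 such that for all x, y ∈ ℝ^d and t, s > 0: ϱ^{(k)}_{γ₁,γ₂}(t, x−y) · ϱ^{(k)}_{γ₃,γ₄}(s, y) ≤ c · (ϱ^{(k)}_{γ₁,γ₂}(t, x−y) + ϱ^{(k)}_{γ₃,γ₄}(s, y)) · Σ_{i∈{1,3}, j∈{2,4}} ϱ^{(k)}_{γᵢ,γⱼ}(t+s, x). -/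
open scoped ENNReal

lemma rho_aux (d : ℕ) (k : ℕ) (α₀ : ℝ) (hα₀ : 0 < α₀)
    (γ γ' : ℝ) (hγ : γ ∈ Set.Icc α₀ 2) (hγ' : γ' ∈ Set.Icc α₀ 2)
    (x z : EuclideanSpace ℝ (Fin d)) (τ τ' T : ℝ)
    (hτ : 0 < τ) (hτ'0 : 0 < τ') (hT1 : τ ≤ T) (hT2 : T ≤ 2 * τ) (hτ'T : τ' ≤ T)
    (hz : ‖x‖ ≤ 2 * ‖z‖) :
    min (ENNReal.ofReal τ ^ (-((d : ℝ) + k) / γ))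
      (ENNReal.ofReal τ' / ENNReal.ofReal ‖z‖ ^ ((d : ℝ) + k + γ')) ≤
    ENNReal.ofReal (2 ^ (((d : ℝ) + k) / α₀ + ((d : ℝ) + k + 2))) * rho d k γ γ' T x := by
  set E : ℝ := ((d : ℝ) + k) / α₀ + ((d : ℝ) + k + 2) with hE
  have hT : 0 < T := lt_of_lt_of_le hτ hT1
  have hc0 : (0 : ℝ) < 2 ^ E := Real.rpow_pos_of_pos two_pos E
  have hdk : (0 : ℝ) ≤ (d : ℝ) + k := by positivity
  have hγ0 : 0 < γ := lt_of_lt_of_le hα₀ hγ.1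
  have hγ'0 : 0 < γ' := lt_of_lt_of_le hα₀ hγ'.1
  have hEdk : (0 : ℝ) ≤ ((d : ℝ) + k) / α₀ := by positivity
  -- time part
  have hA : ENNReal.ofReal τ ^ (-((d : ℝ) + k) / γ) ≤
      ENNReal.ofReal (2 ^ E) * ENNReal.ofReal T ^ (-((d : ℝ) + k) / γ) := by
    rw [ENNReal.ofReal_rpow_of_pos hτ, ENNReal.ofReal_rpow_of_pos hT,
      ← ENNReal.ofReal_mul hc0.le]
    apply ENNReal.ofReal_le_ofReal
    set e : ℝ := ((d : ℝ) + k) / γ with he'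
    have he : 0 ≤ e := by positivity
    have h1 : T ^ e ≤ 2 ^ E * τ ^ e := by
      calc T ^ e ≤ (2 * τ) ^ e := Real.rpow_le_rpow hT.le hT2 he
        _ = 2 ^ e * τ ^ e := Real.mul_rpow (by norm_num) hτ.le
        _ ≤ 2 ^ E * τ ^ e := by
            apply mul_le_mul_of_nonneg_right _ (Real.rpow_pos_of_pos hτ e).le
            apply Real.rpow_le_rpow_of_exponent_le one_le_two
            have h9 : e ≤ ((d : ℝ) + k) / α₀ :=
              div_le_div_of_nonneg_left hdk hα₀ hγ.1
            rw [he', hE] at *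
            linarith
    have hxt : -((d : ℝ) + k) / γ = -e := by rw [he', neg_div]
    rw [hxt, Real.rpow_neg hτ.le, Real.rpow_neg hT.le, inv_eq_one_div, inv_eq_one_div,
      ← mul_div_assoc, mul_one]
    rw [div_le_div_iff₀ (Real.rpow_pos_of_pos hτ e) (Real.rpow_pos_of_pos hT e)]
    calc (1 : ℝ) * T ^ e = T ^ e := one_mul _
      _ ≤ 2 ^ E * τ ^ e := h1
  -- space part
  have hB : ENNReal.ofReal τ' / ENNReal.ofReal ‖z‖ ^ ((d : ℝ) + k + γ') ≤
      ENNReal.ofReal (2 ^ E) *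
        (ENNReal.ofReal T / ENNReal.ofReal ‖x‖ ^ ((d : ℝ) + k + γ')) := by
    set p : ℝ := (d : ℝ) + k + γ' with hp'
    have hp : 0 < p := by positivity
    by_cases hx : ‖x‖ = 0
    · rw [hx]
      rw [ENNReal.ofReal_zero, ENNReal.zero_rpow_of_pos hp, ENNReal.div_zero
        (by simp [ENNReal.ofReal_eq_zero]; linarith)]
      rw [ENNReal.mul_top (by simp [ENNReal.ofReal_eq_zero]; linarith)]
      exact le_top
    · have hx0 : 0 < ‖x‖ := lt_of_le_of_ne (norm_nonneg x) (Ne.symm hx)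
      have hz0 : 0 < ‖z‖ := by nlinarith
      rw [ENNReal.ofReal_rpow_of_pos hz0, ENNReal.ofReal_rpow_of_pos hx0,
        ← ENNReal.ofReal_div_of_pos (Real.rpow_pos_of_pos hz0 p),
        ← ENNReal.ofReal_div_of_pos (Real.rpow_pos_of_pos hx0 p),
        ← ENNReal.ofReal_mul hc0.le]
      apply ENNReal.ofReal_le_ofReal
      rw [← mul_div_assoc, div_le_div_iff₀ (Real.rpow_pos_of_pos hz0 p)
        (Real.rpow_pos_of_pos hx0 p)]
      have h2 : ‖x‖ ^ p ≤ 2 ^ E * ‖z‖ ^ p := by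
        calc ‖x‖ ^ p ≤ (2 * ‖z‖) ^ p := Real.rpow_le_rpow (norm_nonneg x) hz hp.le
          _ = 2 ^ p * ‖z‖ ^ p := Real.mul_rpow (by norm_num) hz0.le
          _ ≤ 2 ^ E * ‖z‖ ^ p := by
              apply mul_le_mul_of_nonneg_right _ (Real.rpow_pos_of_pos hz0 p).le
              apply Real.rpow_le_rpow_of_exponent_le one_le_two
              have h9 : p ≤ (d : ℝ) + k + 2 := by
                have := hγ'.2; rw [hp']; linarith
              rw [hp', hE] at *
              linarith
      calc τ' * ‖x‖ ^ p ≤ T * (2 ^ E * ‖z‖ ^ p) := by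
            apply mul_le_mul hτ'T h2 (by positivity) hT.le
        _ = 2 ^ E * T * ‖z‖ ^ p := by ring
  rw [rho]
  rcases le_total (ENNReal.ofReal T ^ (-((d : ℝ) + k) / γ))
      (ENNReal.ofReal T / ENNReal.ofReal ‖x‖ ^ ((d : ℝ) + k + γ')) with h | h
  · rw [min_eq_left h]
    exact le_trans (min_le_left _ _) hA
  · rw [min_eq_right h]
    exact le_trans (min_le_right _ _) hB

/-- Generalized 3P-type inequality: for `k ∈ ℕ₀`, `γᵢ ∈ [α₀,2]` with `α₀ ∈ (0,2)`,
there is `c = c(d,α₀,k) > 0` such that for all `x, y` and `t, s > 0`: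
`ϱ^{(k)}_{γ₁,γ₂}(t, x−y) · ϱ^{(k)}_{γ₃,γ₄}(s, y)
  ≤ c (ϱ^{(k)}_{γ₁,γ₂}(t,x−y) + ϱ^{(k)}_{γ₃,γ₄}(s,y)) · Σ_{i∈{1,3}, j∈{2,4}} ϱ^{(k)}_{γᵢ,γⱼ}(t+s,x)`. -/
theorem stmt_6 (d : ℕ) (k : ℕ) (α₀ : ℝ) (hα₀ : α₀ ∈ Set.Ioo (0 : ℝ) 2) :
    ∃ c : ℝ, 0 < c ∧ ∀ γ₁ γ₂ γ₃ γ₄ : ℝ,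
      γ₁ ∈ Set.Icc α₀ 2 → γ₂ ∈ Set.Icc α₀ 2 → γ₃ ∈ Set.Icc α₀ 2 → γ₄ ∈ Set.Icc α₀ 2 →
      ∀ x y : EuclideanSpace ℝ (Fin d), ∀ t s : ℝ, 0 < t → 0 < s →
        rho d k γ₁ γ₂ t (x - y) * rho d k γ₃ γ₄ s y ≤
          ENNReal.ofReal c * (rho d k γ₁ γ₂ t (x - y) + rho d k γ₃ γ₄ s y) *
            (rho d k γ₁ γ₂ (t + s) x + rho d k γ₁ γ₄ (t + s) x +
              rho d k γ₃ γ₂ (t + s) x + rho d k γ₃ γ₄ (t + s) x) := by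
  obtain ⟨hα₀0, hα₀2⟩ := hα₀
  refine ⟨2 ^ (((d : ℝ) + k) / α₀ + ((d : ℝ) + k + 2)),
    Real.rpow_pos_of_pos two_pos _, ?_⟩
  intro γ₁ γ₂ γ₃ γ₄ hγ₁ hγ₂ hγ₃ hγ₄ x y t s ht hs
  set c : ℝ := 2 ^ (((d : ℝ) + k) / α₀ + ((d : ℝ) + k + 2)) with hc
  set ρ₁ := rho d k γ₁ γ₂ t (x - y) with hρ₁
  set ρ₂ := rho d k γ₃ γ₄ s y with hρ₂
  set S := rho d k γ₁ γ₂ (t + s) x + rho d k γ₁ γ₄ (t + s) x +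
      rho d k γ₃ γ₂ (t + s) x + rho d k γ₃ γ₄ (t + s) x with hS
  -- norm dichotomy
  have hnorm : ‖x‖ ≤ ‖x - y‖ + ‖y‖ := by
    calc ‖x‖ = ‖(x - y) + y‖ := by rw [sub_add_cancel]
      _ ≤ ‖x - y‖ + ‖y‖ := norm_add_le _ _
  -- key step : min ρ₁ ρ₂ ≤ c * S
  have key : min ρ₁ ρ₂ ≤ ENNReal.ofReal c * S := by
    have hmem : ∀ i j : Fin 2,
        min ρ₁ ρ₂ ≤ ENNReal.ofReal c * S → True := fun _ _ _ => trivial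
    clear hmem
    by_cases hst : s ≤ t
    · by_cases hxz : ‖x‖ ≤ 2 * ‖x - y‖
      · -- use γ₁, γ₂ : time from ρ₁, space from ρ₁
        have h1 : min ρ₁ ρ₂ ≤ ENNReal.ofReal c * rho d k γ₁ γ₂ (t + s) x := by
          refine le_trans ?_ (rho_aux d k α₀ hα₀0 γ₁ γ₂ hγ₁ hγ₂ x (x - y) t t (t + s)
            ht ht (by linarith) (by linarith) (by linarith) hxz)
          exact le_trans (min_le_left _ _) (le_refl _)
        refine h1.trans ?_
        gcongr
        rw [hS]
        calc rho d k γ₁ γ₂ (t + s) x ≤ rho d k γ₁ γ₂ (t + s) x + rho d k γ₁ γ₄ (t + s) x +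
              rho d k γ₃ γ₂ (t + s) x := by
              exact le_add_right (le_add_right (le_refl _))
          _ ≤ _ := le_add_right (le_refl _)
      · have hxy : ‖x‖ ≤ 2 * ‖y‖ := by linarith [not_le.mp hxz]
        -- time from ρ₁ (γ₁), space from ρ₂ (γ₄)
        have h1 : min ρ₁ ρ₂ ≤ ENNReal.ofReal c * rho d k γ₁ γ₄ (t + s) x := by
          refine le_trans ?_ (rho_aux d k α₀ hα₀0 γ₁ γ₄ hγ₁ hγ₄ x y t s (t + s)
            ht hs (by linarith) (by linarith) (by linarith) hxy)
          refine le_min ?_ ?_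
          · exact le_trans (min_le_left _ _) (min_le_left _ _)
          · exact le_trans (min_le_right _ _) (min_le_right _ _)
        refine h1.trans ?_
        gcongr
        rw [hS]
        calc rho d k γ₁ γ₄ (t + s) x ≤ rho d k γ₁ γ₂ (t + s) x + rho d k γ₁ γ₄ (t + s) x +
              rho d k γ₃ γ₂ (t + s) x := by
              exact le_add_right (le_add_left (le_refl _))
          _ ≤ _ := le_add_right (le_refl _)
    · have hts : t ≤ s := le_of_not_ge hst
      by_cases hxz : ‖x‖ ≤ 2 * ‖x - y‖
      · -- time from ρ₂ (γ₃), space from ρ₁ (γ₂)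
        have h1 : min ρ₁ ρ₂ ≤ ENNReal.ofReal c * rho d k γ₃ γ₂ (t + s) x := by
          refine le_trans ?_ (rho_aux d k α₀ hα₀0 γ₃ γ₂ hγ₃ hγ₂ x (x - y) s t (t + s)
            hs ht (by linarith) (by linarith) (by linarith) hxz)
          refine le_min ?_ ?_
          · exact le_trans (min_le_right _ _) (min_le_left _ _)
          · exact le_trans (min_le_left _ _) (min_le_right _ _)
        refine h1.trans ?_
        gcongr
        rw [hS]
        calc rho d k γ₃ γ₂ (t + s) x ≤ rho d k γ₁ γ₂ (t + s) x + rho d k γ₁ γ₄ (t + s) x +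
              rho d k γ₃ γ₂ (t + s) x := le_add_left (le_refl _)
          _ ≤ _ := le_add_right (le_refl _)
      · have hxy : ‖x‖ ≤ 2 * ‖y‖ := by linarith [not_le.mp hxz]
        -- time and space from ρ₂ (γ₃, γ₄)
        have h1 : min ρ₁ ρ₂ ≤ ENNReal.ofReal c * rho d k γ₃ γ₄ (t + s) x := by
          refine le_trans ?_ (rho_aux d k α₀ hα₀0 γ₃ γ₄ hγ₃ hγ₄ x y s s (t + s)
            hs hs (by linarith) (by linarith) (by linarith) hxy)
          exact min_le_right _ _
        refine h1.trans ?_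
        gcongr
        rw [hS]
        exact le_add_left (le_refl _)
  calc ρ₁ * ρ₂ = min ρ₁ ρ₂ * max ρ₁ ρ₂ := (min_mul_max ρ₁ ρ₂).symm
    _ ≤ (ENNReal.ofReal c * S) * (ρ₁ + ρ₂) := by
        apply mul_le_mul' key
        exact max_le le_self_add le_add_self
    _ = ENNReal.ofReal c * (ρ₁ + ρ₂) * S := by ring
end

section
/- For γ₁, γ₂ ∈ (0,2] and 0 ≤ θ < γ₂, there is a constant c (depending on d, γ₁, γ₂, θ) such that for all t > 0: ∫_{ℝ^d} |x|^θ · min(t^{-d/γ₁}, t/|x|^{d+γ₂}) dx ≤ c · t^{1 − (γ₂−θ)(d+γ₁)/(γ₁(d+γ₂))}. -/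
open scoped ENNReal
open MeasureTheory Metric

/-- For `γ₁, γ₂ ∈ (0,2]` and `0 ≤ θ < γ₂` there is a constant `c` such that for all `t > 0`:
`∫_{ℝ^d} |x|^θ · min(t^{-d/γ₁}, t/|x|^{d+γ₂}) dx ≤ c · t^{1 − (γ₂−θ)(d+γ₁)/(γ₁(d+γ₂))}`. -/
theorem stmt_7 (d : ℕ) (hd : 1 ≤ d) (γ₁ γ₂ θ : ℝ)
    (h₁ : γ₁ ∈ Set.Ioc (0 : ℝ) 2) (h₂ : γ₂ ∈ Set.Ioc (0 : ℝ) 2)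
    (hθ : 0 ≤ θ) (hθ₂ : θ < γ₂) :
    ∃ c : ℝ, 0 < c ∧ ∀ t : ℝ, 0 < t →
      (∫⁻ x : EuclideanSpace ℝ (Fin d),
          ENNReal.ofReal (‖x‖ ^ θ) *
            min (ENNReal.ofReal t ^ (-(d : ℝ) / γ₁))
              (ENNReal.ofReal t / ENNReal.ofReal ‖x‖ ^ ((d : ℝ) + γ₂)))
        ≤ ENNReal.ofReal
            (c * t ^ (1 - (γ₂ - θ) * ((d : ℝ) + γ₁) / (γ₁ * ((d : ℝ) + γ₂)))) := by
  obtain ⟨hγ₁, hγ₁2⟩ := h₁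
  obtain ⟨hγ₂, hγ₂2⟩ := h₂
  haveI : Nonempty (Fin d) := ⟨⟨0, hd⟩⟩
  haveI : Nontrivial (EuclideanSpace ℝ (Fin d)) := inferInstance
  set E := EuclideanSpace ℝ (Fin d) with hEdef
  set β : ℝ := ((d : ℝ) + γ₁) / (γ₁ * ((d : ℝ) + γ₂)) with hβdef
  set e : ℝ := 1 - (γ₂ - θ) * ((d : ℝ) + γ₁) / (γ₁ * ((d : ℝ) + γ₂)) with hedef
  have hdγ₂ : (0 : ℝ) < (d : ℝ) + γ₂ := by positivity
  have hγ₁0 : γ₁ ≠ 0 := ne_of_gt hγ₁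
  have hdγ₂0 : ((d : ℝ) + γ₂) ≠ 0 := ne_of_gt hdγ₂
  have he1 : β * (θ + d) + (-(d : ℝ) / γ₁) = e := by
    rw [hβdef, hedef]; field_simp; ring
  have he2 : β * (θ - γ₂) + 1 = e := by
    rw [hβdef, hedef]; field_simp; ring
  set κ : ℝ≥0∞ := volume (ball (0 : E) 1) with hκdef
  have hκtop : κ ≠ ⊤ := measure_ball_lt_top.ne
  set r₀ : ℝ := (2 : ℝ) ^ (θ - γ₂) with hr₀def
  have hr₀0 : 0 < r₀ := Real.rpow_pos_of_pos (by norm_num) _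
  have hr₀1 : r₀ < 1 := Real.rpow_lt_one_of_one_lt_of_neg (by norm_num) (by linarith)
  set C₁ : ℝ := (2 : ℝ) ^ (θ + (d : ℝ)) with hC₁def
  have hC₁0 : 0 < C₁ := Real.rpow_pos_of_pos (by norm_num) _
  set C₀ : ℝ := 1 + C₁ * (1 - r₀)⁻¹ with hC₀def
  have h1r₀ : 0 < 1 - r₀ := by linarith
  clear_value β e r₀ C₁ C₀
  have hC₀0 : 0 < C₀ := by
    have : 0 < C₁ * (1 - r₀)⁻¹ := by positivity
    linarith
  refine ⟨κ.toReal * C₀ + 1, by nlinarith [ENNReal.toReal_nonneg (a := κ)], fun t ht => ?_⟩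
  set R : ℝ := t ^ β with hRdef
  have hR : 0 < R := Real.rpow_pos_of_pos ht _
  have hte : 0 < t ^ e := Real.rpow_pos_of_pos ht _
  set f : E → ℝ≥0∞ := fun x =>
    ENNReal.ofReal (‖x‖ ^ θ) *
      min (ENNReal.ofReal t ^ (-(d : ℝ) / γ₁))
        (ENNReal.ofReal t / ENNReal.ofReal ‖x‖ ^ ((d : ℝ) + γ₂)) with hfdef
  -- ball part
  have hball : ∫⁻ x in ball (0 : E) R, f x ≤ ENNReal.ofReal (t ^ e) * κ := by
    have hpt : ∀ x ∈ ball (0 : E) R, f x ≤ ENNReal.ofReal (R ^ θ * t ^ (-(d : ℝ) / γ₁)) := by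
      intro x hx
      rw [mem_ball_zero_iff] at hx
      have h1 : ENNReal.ofReal (‖x‖ ^ θ) ≤ ENNReal.ofReal (R ^ θ) :=
        ENNReal.ofReal_le_ofReal (Real.rpow_le_rpow (norm_nonneg x) hx.le hθ)
      have h2 : min (ENNReal.ofReal t ^ (-(d : ℝ) / γ₁))
          (ENNReal.ofReal t / ENNReal.ofReal ‖x‖ ^ ((d : ℝ) + γ₂))
          ≤ ENNReal.ofReal (t ^ (-(d : ℝ) / γ₁)) := by
        rw [← ENNReal.ofReal_rpow_of_pos ht]
        exact min_le_left _ _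
      calc f x ≤ ENNReal.ofReal (R ^ θ) * ENNReal.ofReal (t ^ (-(d : ℝ) / γ₁)) :=
            mul_le_mul' h1 h2
        _ = ENNReal.ofReal (R ^ θ * t ^ (-(d : ℝ) / γ₁)) :=
            (ENNReal.ofReal_mul (by positivity)).symm
    calc ∫⁻ x in ball (0 : E) R, f x
        ≤ ∫⁻ _ in ball (0 : E) R, ENNReal.ofReal (R ^ θ * t ^ (-(d : ℝ) / γ₁)) :=
          setLIntegral_mono measurable_const hpt
      _ = ENNReal.ofReal (R ^ θ * t ^ (-(d : ℝ) / γ₁)) * volume (ball (0 : E) R) :=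
          setLIntegral_const _ _
      _ = ENNReal.ofReal (R ^ θ * t ^ (-(d : ℝ) / γ₁)) * (ENNReal.ofReal (R ^ d) * κ) := by
          rw [Measure.addHaar_ball volume (0 : E) hR.le, finrank_euclideanSpace_fin]
      _ = ENNReal.ofReal (t ^ e) * κ := by
          rw [← mul_assoc, ← ENNReal.ofReal_mul (by positivity)]
          congr 2
          rw [show R ^ d = R ^ ((d : ℕ) : ℝ) from (Real.rpow_natCast R d).symm]
          rw [hRdef, ← Real.rpow_mul ht.le, ← Real.rpow_mul ht.le,
            ← Real.rpow_add ht, ← Real.rpow_add ht]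
          rw [← he1]
          congr 1
          ring
  -- annuli
  set A : ℕ → Set E := fun n =>
    closedBall (0 : E) ((2 : ℝ) ^ (n + 1) * R) \ ball (0 : E) ((2 : ℝ) ^ n * R) with hAdef
  have hcover : (ball (0 : E) R)ᶜ ⊆ ⋃ n, A n := by
    intro x hx
    rw [Set.mem_compl_iff, mem_ball_zero_iff, not_lt] at hx
    set y : ℝ := ‖x‖ / R with hydef
    have hy1 : 1 ≤ y := (one_le_div hR).2 hx
    have hy0 : 0 < y := lt_of_lt_of_le one_pos hy1
    set n : ℕ := ⌊Real.logb 2 y⌋₊ with hndef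
    have hlog0 : 0 ≤ Real.logb 2 y := Real.logb_nonneg (by norm_num) hy1
    have h2n : (2 : ℝ) ^ n ≤ y := by
      calc (2 : ℝ) ^ n = (2 : ℝ) ^ ((n : ℕ) : ℝ) := (Real.rpow_natCast 2 n).symm
        _ ≤ (2 : ℝ) ^ Real.logb 2 y :=
            Real.rpow_le_rpow_of_exponent_le (by norm_num) (Nat.floor_le hlog0)
        _ = y := Real.rpow_logb (by norm_num) (by norm_num) hy0
    have h2n1 : y ≤ (2 : ℝ) ^ (n + 1) := by
      calc y = (2 : ℝ) ^ Real.logb 2 y := (Real.rpow_logb (by norm_num) (by norm_num) hy0).symm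
        _ ≤ (2 : ℝ) ^ (((n : ℕ) : ℝ) + 1) :=
            Real.rpow_le_rpow_of_exponent_le (by norm_num) (Nat.lt_floor_add_one _).le
        _ = (2 : ℝ) ^ (n + 1) := by
            rw [← Real.rpow_natCast 2 (n + 1)]; norm_num
    refine Set.mem_iUnion.2 ⟨n, ?_, ?_⟩
    · rw [mem_closedBall_zero_iff]
      calc ‖x‖ = y * R := by rw [hydef, div_mul_cancel₀ _ (ne_of_gt hR)]
        _ ≤ (2 : ℝ) ^ (n + 1) * R := mul_le_mul_of_nonneg_right h2n1 hR.le
    · simp only [mem_ball_zero_iff, not_lt]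
      calc (2 : ℝ) ^ n * R ≤ y * R := mul_le_mul_of_nonneg_right h2n hR.le
        _ = ‖x‖ := by rw [hydef, div_mul_cancel₀ _ (ne_of_gt hR)]
  have hannulus : ∀ n : ℕ, ∫⁻ x in A n, f x ≤ ENNReal.ofReal (t ^ e * (C₁ * r₀ ^ n)) * κ := by
    intro n
    set u : ℝ := (2 : ℝ) ^ (n + 1) * R with hudef
    set v : ℝ := (2 : ℝ) ^ n * R with hvdef
    have hu0 : 0 < u := by positivity
    have hv0 : 0 < v := by positivity
    have hpt : ∀ x ∈ A n, f x ≤ ENNReal.ofReal (u ^ θ * (t / v ^ ((d : ℝ) + γ₂))) := by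
      intro x hx
      obtain ⟨hx1, hx2⟩ := hx
      rw [mem_closedBall_zero_iff] at hx1
      simp only [mem_ball_zero_iff, not_lt] at hx2
      have h1 : ENNReal.ofReal (‖x‖ ^ θ) ≤ ENNReal.ofReal (u ^ θ) :=
        ENNReal.ofReal_le_ofReal (Real.rpow_le_rpow (norm_nonneg x) hx1 hθ)
      have h2 : min (ENNReal.ofReal t ^ (-(d : ℝ) / γ₁))
          (ENNReal.ofReal t / ENNReal.ofReal ‖x‖ ^ ((d : ℝ) + γ₂))
          ≤ ENNReal.ofReal (t / v ^ ((d : ℝ) + γ₂)) := by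
        refine le_trans (min_le_right _ _) ?_
        rw [ENNReal.ofReal_div_of_pos (by positivity), ← ENNReal.ofReal_rpow_of_pos hv0]
        exact ENNReal.div_le_div le_rfl
          (ENNReal.rpow_le_rpow (ENNReal.ofReal_le_ofReal hx2) hdγ₂.le)
      calc f x ≤ ENNReal.ofReal (u ^ θ) * ENNReal.ofReal (t / v ^ ((d : ℝ) + γ₂)) :=
            mul_le_mul' h1 h2
        _ = ENNReal.ofReal (u ^ θ * (t / v ^ ((d : ℝ) + γ₂))) :=
            (ENNReal.ofReal_mul (by positivity)).symm
    have hmeasA : volume (A n) ≤ ENNReal.ofReal (u ^ d) * κ := by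
      calc volume (A n) ≤ volume (closedBall (0 : E) u) := measure_mono Set.diff_subset
        _ = ENNReal.ofReal (u ^ d) * κ := by
            rw [Measure.addHaar_closedBall volume (0 : E) hu0.le, finrank_euclideanSpace_fin]
    have hkey : u ^ θ * (t / v ^ ((d : ℝ) + γ₂)) * u ^ (d : ℕ) = t ^ e * (C₁ * r₀ ^ n) := by
      set T : ℝ := Real.log t with hTdef
      set L : ℝ := Real.log 2 with hLdef
      have hT : t = Real.exp T := (Real.exp_log ht).symm
      have hlogu : Real.log u = ((n : ℝ) + 1) * L + β * T := by
        rw [hudef, Real.log_mul (by positivity) (ne_of_gt hR), Real.log_pow, hRdef,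
          Real.log_rpow ht]
        push_cast; ring
      have hlogv : Real.log v = (n : ℝ) * L + β * T := by
        rw [hvdef, Real.log_mul (by positivity) (ne_of_gt hR), Real.log_pow, hRdef,
          Real.log_rpow ht]
      have e1 : u ^ θ = Real.exp ((((n : ℝ) + 1) * L + β * T) * θ) := by
        rw [Real.rpow_def_of_pos hu0, hlogu]
      have e2 : v ^ ((d : ℝ) + γ₂) = Real.exp (((n : ℝ) * L + β * T) * ((d : ℝ) + γ₂)) := by
        rw [Real.rpow_def_of_pos hv0, hlogv]
      have e3 : u ^ (d : ℕ) = Real.exp ((((n : ℝ) + 1) * L + β * T) * d) := by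
        rw [show u ^ (d : ℕ) = u ^ ((d : ℕ) : ℝ) from (Real.rpow_natCast u d).symm,
          Real.rpow_def_of_pos hu0, hlogu]
      have e4 : t ^ e = Real.exp (T * e) := by
        rw [Real.rpow_def_of_pos ht]
      have e5 : C₁ = Real.exp (L * (θ + (d : ℝ))) := by
        rw [hC₁def, Real.rpow_def_of_pos (by norm_num)]
      have e6 : r₀ ^ n = Real.exp ((n : ℝ) * (L * (θ - γ₂))) := by
        rw [hr₀def, Real.rpow_def_of_pos (by norm_num), ← Real.exp_nat_mul]
      rw [e1, e2, e3, e4, e5, e6, hT, ← Real.exp_sub, ← Real.exp_add, ← Real.exp_add,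
        ← Real.exp_add, ← Real.exp_add, Real.exp_eq_exp]
      rw [← he2]
      ring
    calc ∫⁻ x in A n, f x
        ≤ ∫⁻ _ in A n, ENNReal.ofReal (u ^ θ * (t / v ^ ((d : ℝ) + γ₂))) :=
          setLIntegral_mono measurable_const hpt
      _ = ENNReal.ofReal (u ^ θ * (t / v ^ ((d : ℝ) + γ₂))) * volume (A n) :=
          setLIntegral_const _ _
      _ ≤ ENNReal.ofReal (u ^ θ * (t / v ^ ((d : ℝ) + γ₂))) * (ENNReal.ofReal (u ^ d) * κ) :=
          mul_le_mul_right hmeasA _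
      _ = ENNReal.ofReal (t ^ e * (C₁ * r₀ ^ n)) * κ := by
          rw [← mul_assoc, ← ENNReal.ofReal_mul (by positivity), hkey]
  have hsum : ∑' n : ℕ, ENNReal.ofReal (t ^ e * (C₁ * r₀ ^ n)) * κ
      = ENNReal.ofReal (t ^ e * (C₁ * (1 - r₀)⁻¹)) * κ := by
    rw [ENNReal.tsum_mul_right]
    congr 1
    have heq : ∀ n : ℕ, ENNReal.ofReal (t ^ e * (C₁ * r₀ ^ n))
        = ENNReal.ofReal (t ^ e * C₁) * ENNReal.ofReal r₀ ^ n := by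
      intro n
      rw [← ENNReal.ofReal_pow hr₀0.le, ← ENNReal.ofReal_mul (by positivity), mul_assoc]
    simp_rw [heq]
    rw [ENNReal.tsum_mul_left, ENNReal.tsum_geometric, ← ENNReal.ofReal_one,
      ← ENNReal.ofReal_sub 1 hr₀0.le, ← ENNReal.ofReal_inv_of_pos h1r₀,
      ← ENNReal.ofReal_mul (by positivity), mul_assoc]
  calc ∫⁻ x, f x
      = (∫⁻ x in ball (0 : E) R, f x) + ∫⁻ x in (ball (0 : E) R)ᶜ, f x :=
        (lintegral_add_compl f measurableSet_ball).symm
    _ ≤ ENNReal.ofReal (t ^ e) * κ + ENNReal.ofReal (t ^ e * (C₁ * (1 - r₀)⁻¹)) * κ := by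
        refine add_le_add hball ?_
        calc ∫⁻ x in (ball (0 : E) R)ᶜ, f x
            ≤ ∫⁻ x in ⋃ n, A n, f x := lintegral_mono_set hcover
          _ ≤ ∑' n : ℕ, ∫⁻ x in A n, f x := lintegral_iUnion_le A f
          _ ≤ ∑' n : ℕ, ENNReal.ofReal (t ^ e * (C₁ * r₀ ^ n)) * κ :=
              ENNReal.tsum_le_tsum hannulus
          _ = ENNReal.ofReal (t ^ e * (C₁ * (1 - r₀)⁻¹)) * κ := hsum
    _ = ENNReal.ofReal (t ^ e * C₀) * κ := by
        rw [← add_mul, ← ENNReal.ofReal_add (by positivity) (by positivity)]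
        congr 2
        rw [hC₀def]; ring
    _ ≤ ENNReal.ofReal ((κ.toReal * C₀ + 1) * t ^ e) := by
        conv_lhs => rw [← ENNReal.ofReal_toReal hκtop]
        rw [← ENNReal.ofReal_mul (by positivity)]
        refine ENNReal.ofReal_le_ofReal ?_
        nlinarith [ENNReal.toReal_nonneg (a := κ)]
end

section
/- Let k ∈ ℕ₀, T > 0, and γ₁, γ₂ ∈ [α₀, 2] with some α₀ ∈ (1,2). For any p ∈ [0, k], there is a constant c = c(T, p, α₀, d, k) > 0 such that for all t ∈ (0, T] and x ∈ ℝ^d: |x|^p · ϱ^{(k)}_{γ₁,γ₂}(t,x) ≤ c · t^{p/(γ₁∨γ₂) − k/(γ₁∧γ₂)} · ϱ_{γ₁,γ₂}(t,x). -/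
open scoped ENNReal

private lemma pow_le_aux {T t e b M : ℝ} (ht : 0 < t) (htT : t ≤ T)
    (hbe : b ≤ e) (hdiff : e - b ≤ M) :
    t ^ e ≤ max 1 T ^ M * t ^ b := by
  have h1 : t ^ e = t ^ (e - b) * t ^ b := by
    rw [← Real.rpow_add ht]; ring_nf
  rw [h1]
  have h2 : t ^ (e - b) ≤ max 1 T ^ (e - b) :=
    Real.rpow_le_rpow ht.le (htT.trans (le_max_right 1 T)) (sub_nonneg.2 hbe)
  have h3 : max 1 T ^ (e - b) ≤ max 1 T ^ M :=
    Real.rpow_le_rpow_of_exponent_le (le_max_left 1 T) hdiff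
  exact mul_le_mul_of_nonneg_right (h2.trans h3) (Real.rpow_nonneg ht.le b)

/-- For `k ∈ ℕ₀`, `T > 0`, `γ₁, γ₂ ∈ [α₀,2]` with `α₀ ∈ (1,2)`, and `p ∈ [0,k]`, there is
`c > 0` such that for all `t ∈ (0,T]` and `x`:
`|x|^p · ϱ^{(k)}_{γ₁,γ₂}(t,x) ≤ c · t^{p/(γ₁∨γ₂) − k/(γ₁∧γ₂)} · ϱ_{γ₁,γ₂}(t,x)`. -/
theorem stmt_8 (d : ℕ) (k : ℕ) (T α₀ p : ℝ) (hT : 0 < T)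
    (hα₀ : α₀ ∈ Set.Ioo (1 : ℝ) 2) (hp : p ∈ Set.Icc (0 : ℝ) (k : ℝ)) :
    ∃ c : ℝ, 0 < c ∧ ∀ γ₁ γ₂ : ℝ, γ₁ ∈ Set.Icc α₀ 2 → γ₂ ∈ Set.Icc α₀ 2 →
      ∀ t ∈ Set.Ioc (0 : ℝ) T, ∀ x : EuclideanSpace ℝ (Fin d),
        ENNReal.ofReal (‖x‖ ^ p) * rho d k γ₁ γ₂ t x ≤
          ENNReal.ofReal (c * t ^ (p / max γ₁ γ₂ - (k : ℝ) / min γ₁ γ₂)) *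
            rho d 0 γ₁ γ₂ t x := by
  obtain ⟨hα1, hα2⟩ := hα₀
  obtain ⟨hp0, hpk⟩ := hp
  have hk0 : (0:ℝ) ≤ (k:ℝ) := le_trans hp0 hpk
  refine ⟨max 1 T ^ (2 * (k:ℝ) + 2),
    Real.rpow_pos_of_pos (lt_of_lt_of_le one_pos (le_max_left 1 T)) _, ?_⟩
  set C : ℝ := max 1 T ^ (2 * (k:ℝ) + 2) with hCdef
  rintro γ₁ γ₂ ⟨hγ₁l, hγ₁u⟩ ⟨hγ₂l, hγ₂u⟩ t ⟨ht, htT⟩ x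
  have hγ₁0 : (0:ℝ) < γ₁ := lt_of_lt_of_le (lt_trans one_pos hα1) hγ₁l
  have hγ₂0 : (0:ℝ) < γ₂ := lt_of_lt_of_le (lt_trans one_pos hα1) hγ₂l
  set G : ℝ := max γ₁ γ₂ with hGdef
  set g : ℝ := min γ₁ γ₂ with hgdef
  have hg1 : 1 < g := lt_of_lt_of_le hα1 (le_min hγ₁l hγ₂l)
  have hg0 : (0:ℝ) < g := lt_trans one_pos hg1
  have hG0 : (0:ℝ) < G := lt_of_lt_of_le hγ₁0 (le_max_left _ _)
  have hdγ₂ : (0:ℝ) < (d:ℝ) + γ₂ := by positivity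
  set s : ℝ := (1 + (d:ℝ)/γ₁) / ((d:ℝ) + γ₂) with hs
  have hs0 : (0:ℝ) < s := by positivity
  -- s is between 1/G and 1/g
  have hsG : 1 / G ≤ s := by
    rw [hs, div_le_div_iff₀ hG0 hdγ₂]
    have h2 : γ₂ ≤ G := le_max_right γ₁ γ₂
    have h1 : γ₁ ≤ G := le_max_left γ₁ γ₂
    have hdd : (d:ℝ) ≤ (d:ℝ) * G / γ₁ := by
      rw [le_div_iff₀ hγ₁0]; nlinarith
    have hexp : (1 + (d:ℝ)/γ₁) * G = G + (d:ℝ) * G / γ₁ := by ring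
    rw [hexp]; linarith
  have hsg : s ≤ 1 / g := by
    rw [hs, div_le_div_iff₀ hdγ₂ hg0]
    have h2 : g ≤ γ₂ := min_le_right γ₁ γ₂
    have h1 : g ≤ γ₁ := min_le_left γ₁ γ₂
    have hdd : (d:ℝ) * g / γ₁ ≤ (d:ℝ) := by
      rw [div_le_iff₀ hγ₁0]; nlinarith
    have hexp : (1 + (d:ℝ)/γ₁) * g = g + (d:ℝ) * g / γ₁ := by ring
    rw [hexp]; linarith
  have hginv1 : 1 / g ≤ 1 := by rw [div_le_one hg0]; linarith
  have h1γ : 1 / γ₁ ≤ 1 / g := one_div_le_one_div_of_le hg0 (min_le_left _ _)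
  have hA1 : p / G ≤ p * s := by
    have := mul_le_mul_of_nonneg_left hsG hp0
    rwa [mul_one_div] at this
  have hA2 : (k:ℝ) / γ₁ ≤ (k:ℝ) / g := by
    have := mul_le_mul_of_nonneg_left h1γ hk0
    rwa [mul_one_div, mul_one_div] at this
  have hB2 : (k:ℝ) * s ≤ (k:ℝ) / g := by
    have := mul_le_mul_of_nonneg_left hsg hk0
    rwa [mul_one_div] at this
  have hps : p * s ≤ (k:ℝ) := by
    have h1 : p * s ≤ p * (1/g) := mul_le_mul_of_nonneg_left hsg hp0
    have h2 : p * (1/g) ≤ p * 1 := mul_le_mul_of_nonneg_left hginv1 hp0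
    linarith
  have hkg : (k:ℝ) / g ≤ (k:ℝ) := by
    rw [div_le_iff₀ hg0]; nlinarith
  have hpG0 : (0:ℝ) ≤ p / G := by positivity
  have hkγ₁0 : (0:ℝ) ≤ (k:ℝ) / γ₁ := by positivity
  set β : ℝ := p / G - (k:ℝ) / g with hβ
  have ha0 : ENNReal.ofReal t ≠ 0 := by
    simp [ENNReal.ofReal_eq_zero, not_le, ht]
  have hatop : ENNReal.ofReal t ≠ ⊤ := ENNReal.ofReal_ne_top
  have hO : ∀ r : ℝ, (ENNReal.ofReal t) ^ r = ENNReal.ofReal (t ^ r) := fun r =>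
    ENNReal.ofReal_rpow_of_pos ht
  have hCpos : 0 < C := Real.rpow_pos_of_pos (lt_of_lt_of_le one_pos (le_max_left 1 T)) _
  rcases le_or_gt (‖x‖ ^ ((d:ℝ) + γ₂)) (t ^ (1 + (d:ℝ)/γ₁)) with hcase | hcase
  · -- Case A : ‖x‖ ≤ t ^ s, rho0 = first branch
    have hx : ‖x‖ ≤ t ^ s := by
      have h1 : (‖x‖ ^ ((d:ℝ)+γ₂)) ^ (((d:ℝ)+γ₂)⁻¹) ≤ (t ^ (1+(d:ℝ)/γ₁)) ^ (((d:ℝ)+γ₂)⁻¹) :=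
        Real.rpow_le_rpow (by positivity) hcase (by positivity)
      rw [← Real.rpow_mul (norm_nonneg x), ← Real.rpow_mul ht.le,
        mul_inv_cancel₀ (ne_of_gt hdγ₂), Real.rpow_one] at h1
      rwa [show (1+(d:ℝ)/γ₁) * ((d:ℝ)+γ₂)⁻¹ = s by rw [hs]; ring] at h1
    have hmin0 : rho d 0 γ₁ γ₂ t x
        = (ENNReal.ofReal t) ^ (-((d:ℝ) + 0) / γ₁) := by
      rw [rho]
      apply min_eq_left
      rw [ENNReal.le_div_iff_mul_le (Or.inr ha0) (Or.inr hatop)]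
      rw [hO, ENNReal.ofReal_rpow_of_nonneg (norm_nonneg x) (by positivity),
        ← ENNReal.ofReal_mul (by positivity)]
      apply ENNReal.ofReal_le_ofReal
      have h2 : ‖x‖ ^ ((d:ℝ) + 0 + γ₂) ≤ t ^ (1 + (d:ℝ)/γ₁) := by
        rwa [show (d:ℝ) + 0 + γ₂ = (d:ℝ) + γ₂ by ring]
      calc t ^ (-((d:ℝ) + 0) / γ₁) * ‖x‖ ^ ((d:ℝ) + 0 + γ₂)
          ≤ t ^ (-((d:ℝ) + 0) / γ₁) * t ^ (1 + (d:ℝ)/γ₁) :=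
            mul_le_mul_of_nonneg_left h2 (Real.rpow_nonneg ht.le _)
        _ = t ^ (-((d:ℝ) + 0) / γ₁ + (1 + (d:ℝ)/γ₁)) := (Real.rpow_add ht _ _).symm
        _ = t := by
            rw [show -((d:ℝ) + 0) / γ₁ + (1 + (d:ℝ)/γ₁) = 1 by field_simp; ring, Real.rpow_one]
    rw [hmin0]
    have hbe : β + (-((d:ℝ) + 0) / γ₁) ≤ s * p + (-((d:ℝ) + (k:ℝ)) / γ₁) := by
      have hsplit : -((d:ℝ) + (k:ℝ)) / γ₁ = -((d:ℝ)/γ₁) - (k:ℝ)/γ₁ := by ring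
      have hsplit0 : -((d:ℝ) + 0) / γ₁ = -((d:ℝ)/γ₁) := by ring
      rw [hβ, hsplit, hsplit0]
      linarith
    have hdiff : (s * p + (-((d:ℝ) + (k:ℝ)) / γ₁)) - (β + (-((d:ℝ) + 0) / γ₁))
        ≤ 2 * (k:ℝ) + 2 := by
      have hsplit : -((d:ℝ) + (k:ℝ)) / γ₁ = -((d:ℝ)/γ₁) - (k:ℝ)/γ₁ := by ring
      have hsplit0 : -((d:ℝ) + 0) / γ₁ = -((d:ℝ)/γ₁) := by ring
      rw [hβ, hsplit, hsplit0]
      linarith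
    have realA : ‖x‖ ^ p * t ^ (-((d:ℝ) + (k:ℝ)) / γ₁)
        ≤ (C * t ^ β) * t ^ (-((d:ℝ) + 0) / γ₁) := by
      have h1 : ‖x‖ ^ p ≤ t ^ (s * p) := by
        rw [Real.rpow_mul ht.le]
        exact Real.rpow_le_rpow (norm_nonneg x) hx hp0
      calc ‖x‖ ^ p * t ^ (-((d:ℝ) + (k:ℝ)) / γ₁)
          ≤ t ^ (s * p) * t ^ (-((d:ℝ) + (k:ℝ)) / γ₁) :=
            mul_le_mul_of_nonneg_right h1 (Real.rpow_nonneg ht.le _)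
        _ = t ^ (s * p + (-((d:ℝ) + (k:ℝ)) / γ₁)) := (Real.rpow_add ht _ _).symm
        _ ≤ C * t ^ (β + (-((d:ℝ) + 0) / γ₁)) := pow_le_aux ht htT hbe hdiff
        _ = (C * t ^ β) * t ^ (-((d:ℝ) + 0) / γ₁) := by rw [Real.rpow_add ht]; ring
    calc ENNReal.ofReal (‖x‖ ^ p) * rho d (k:ℝ) γ₁ γ₂ t x
        ≤ ENNReal.ofReal (‖x‖ ^ p) * (ENNReal.ofReal t) ^ (-((d:ℝ) + (k:ℝ)) / γ₁) := by
          gcongr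
          exact min_le_left _ _
      _ = ENNReal.ofReal (‖x‖ ^ p * t ^ (-((d:ℝ) + (k:ℝ)) / γ₁)) := by
          rw [hO, ← ENNReal.ofReal_mul (by positivity)]
      _ ≤ ENNReal.ofReal ((C * t ^ β) * t ^ (-((d:ℝ) + 0) / γ₁)) :=
          ENNReal.ofReal_le_ofReal realA
      _ = ENNReal.ofReal (C * t ^ β) * (ENNReal.ofReal t) ^ (-((d:ℝ) + 0) / γ₁) := by
          rw [ENNReal.ofReal_mul (by positivity), hO]
  · -- Case B : t ^ s ≤ ‖x‖, rho0 = second branch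
    have hx : t ^ s ≤ ‖x‖ := by
      have h1 : (t ^ (1+(d:ℝ)/γ₁)) ^ (((d:ℝ)+γ₂)⁻¹) ≤ (‖x‖ ^ ((d:ℝ)+γ₂)) ^ (((d:ℝ)+γ₂)⁻¹) :=
        Real.rpow_le_rpow (by positivity) hcase.le (by positivity)
      rw [← Real.rpow_mul (norm_nonneg x), ← Real.rpow_mul ht.le,
        mul_inv_cancel₀ (ne_of_gt hdγ₂), Real.rpow_one] at h1
      rwa [show (1+(d:ℝ)/γ₁) * ((d:ℝ)+γ₂)⁻¹ = s by rw [hs]; ring] at h1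
    have hx0 : (0:ℝ) < ‖x‖ := lt_of_lt_of_le (Real.rpow_pos_of_pos ht s) hx
    have hmin0 : rho d 0 γ₁ γ₂ t x
        = ENNReal.ofReal t / (ENNReal.ofReal ‖x‖) ^ ((d:ℝ) + 0 + γ₂) := by
      rw [rho]
      apply min_eq_right
      have h2 : ENNReal.ofReal (t ^ (1 + (d:ℝ)/γ₁))
          ≤ (ENNReal.ofReal ‖x‖) ^ ((d:ℝ) + 0 + γ₂) := by
        rw [ENNReal.ofReal_rpow_of_pos hx0]
        apply ENNReal.ofReal_le_ofReal
        rw [show (d:ℝ) + 0 + γ₂ = (d:ℝ) + γ₂ by ring]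
        exact hcase.le
      calc ENNReal.ofReal t / (ENNReal.ofReal ‖x‖) ^ ((d:ℝ) + 0 + γ₂)
          ≤ ENNReal.ofReal t / ENNReal.ofReal (t ^ (1 + (d:ℝ)/γ₁)) :=
            ENNReal.div_le_div_left h2 _
        _ = (ENNReal.ofReal t) ^ (-((d:ℝ) + 0) / γ₁) := by
            rw [← hO, show -((d:ℝ) + 0) / γ₁ = (1:ℝ) - (1 + (d:ℝ)/γ₁) from by ring,
              ENNReal.rpow_sub _ _ ha0 hatop, ENNReal.rpow_one]
    rw [hmin0]
    have hbe : β ≤ s * (p - (k:ℝ)) := by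
      have : s * (p - (k:ℝ)) = p * s - (k:ℝ) * s := by ring
      rw [this, hβ]; linarith
    have hdiff : s * (p - (k:ℝ)) - β ≤ 2 * (k:ℝ) + 2 := by
      have hsp : s * (p - (k:ℝ)) ≤ 0 :=
        mul_nonpos_iff.2 (Or.inl ⟨hs0.le, by linarith⟩)
      rw [hβ]; linarith
    have key : ‖x‖ ^ (p - (k:ℝ)) ≤ C * t ^ β := by
      calc ‖x‖ ^ (p - (k:ℝ)) ≤ (t ^ s) ^ (p - (k:ℝ)) :=
            Real.rpow_le_rpow_of_nonpos (Real.rpow_pos_of_pos ht s) hx (by linarith)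
        _ = t ^ (s * (p - (k:ℝ))) := by rw [← Real.rpow_mul ht.le]
        _ ≤ C * t ^ β := pow_le_aux ht htT hbe hdiff
    have realB : ‖x‖ ^ p * (t / ‖x‖ ^ ((d:ℝ) + (k:ℝ) + γ₂))
        ≤ (C * t ^ β) * (t / ‖x‖ ^ ((d:ℝ) + 0 + γ₂)) := by
      have hEq1 : ‖x‖ ^ p * (t / ‖x‖ ^ ((d:ℝ) + (k:ℝ) + γ₂))
          = t * ‖x‖ ^ (p - ((d:ℝ) + (k:ℝ) + γ₂)) := by
        rw [Real.rpow_sub hx0]; ring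
      have hEq2 : ‖x‖ ^ (p - (k:ℝ)) * (t / ‖x‖ ^ ((d:ℝ) + 0 + γ₂))
          = t * ‖x‖ ^ (p - ((d:ℝ) + (k:ℝ) + γ₂)) := by
        rw [show p - ((d:ℝ) + (k:ℝ) + γ₂) = (p - (k:ℝ)) - ((d:ℝ) + 0 + γ₂) by ring,
          Real.rpow_sub hx0 (p - (k:ℝ)) ((d:ℝ) + 0 + γ₂)]
        ring
      calc ‖x‖ ^ p * (t / ‖x‖ ^ ((d:ℝ) + (k:ℝ) + γ₂))
          = ‖x‖ ^ (p - (k:ℝ)) * (t / ‖x‖ ^ ((d:ℝ) + 0 + γ₂)) := by rw [hEq1, hEq2]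
        _ ≤ (C * t ^ β) * (t / ‖x‖ ^ ((d:ℝ) + 0 + γ₂)) :=
            mul_le_mul_of_nonneg_right key (by positivity)
    have hdiv : ∀ r : ℝ, 0 ≤ r →
        ENNReal.ofReal t / (ENNReal.ofReal ‖x‖) ^ r = ENNReal.ofReal (t / ‖x‖ ^ r) := by
      intro r hr
      rw [ENNReal.ofReal_rpow_of_pos hx0, ENNReal.ofReal_div_of_pos (Real.rpow_pos_of_pos hx0 r)]
    calc ENNReal.ofReal (‖x‖ ^ p) * rho d (k:ℝ) γ₁ γ₂ t x
        ≤ ENNReal.ofReal (‖x‖ ^ p) *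
            (ENNReal.ofReal t / (ENNReal.ofReal ‖x‖) ^ ((d:ℝ) + (k:ℝ) + γ₂)) := by
          gcongr
          exact min_le_right _ _
      _ = ENNReal.ofReal (‖x‖ ^ p * (t / ‖x‖ ^ ((d:ℝ) + (k:ℝ) + γ₂))) := by
          rw [hdiv _ (by positivity), ← ENNReal.ofReal_mul (by positivity)]
      _ ≤ ENNReal.ofReal ((C * t ^ β) * (t / ‖x‖ ^ ((d:ℝ) + 0 + γ₂))) :=
          ENNReal.ofReal_le_ofReal realB
      _ = ENNReal.ofReal (C * t ^ β) *
            (ENNReal.ofReal t / (ENNReal.ofReal ‖x‖) ^ ((d:ℝ) + 0 + γ₂)) := by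
          rw [ENNReal.ofReal_mul (by positivity), hdiv _ (by positivity)]
end

section
/- Let α₀ ∈ (0,2), α ∈ [α₀, 2), and set ϱ_α(s,x) := min(s^{-d/α}, s/|x|^{d+α}). There exists a constant c = c(d, α₀) > 0 such that for all s > 0 and x ∈ ℝ^d: ∫_{|z| > max(s^{1/α}, |x|/2)} ϱ_α(s, x+z) · (2−α)·|z|^{-d-α} dz ≤ c · (2−α) · s^{-1} · ϱ_α(s, x). -/
/-!
Write `ϱ_α(s,x) = min(P, Q(x))` with `P = s^{-d/α}` and `Q(x) = s|x|^{-d-α}`; the integral is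
bounded by a multiple of each.

Since `ϱ ≤ P` and `|z| > s^{1/α}`, the integral is at most `P` times the tail
`∫_{|z|>R} |z|^{-d-α} dz`. By scaling this tail equals `R^{-α}` times the tail at radius `1`,
which decreases in `α` and is finite at `α = α₀`; and `R^{-α} ≤ s⁻¹`.

Since `|z| > |x|/2`, the kernel is at most `2^{d+α}|x|^{-d-α} ≤ 2^{d+2}|x|^{-d-α}`, so the integral
is at most that times `∫ ϱ`. The mass `∫ ϱ` is bounded uniformly in `s` and `α`: on the ball of
radius `s^{1/α}` use `ϱ ≤ P` (the ball has volume `s^{d/α}` times that of the unit ball), outside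
it use `ϱ(y) ≤ s|y|^{-d-α}` and the tail bound again.
-/

open scoped ENNReal
open MeasureTheory

/-- `ϱ_α(s,x) := min(s^{-d/α}, s/|x|^{d+α})`, valued in `ℝ≥0∞`. -/
noncomputable def rhoA (d : ℕ) (α s : ℝ) (x : EuclideanSpace ℝ (Fin d)) : ℝ≥0∞ :=
  min (ENNReal.ofReal s ^ (-(d : ℝ) / α))
    (ENNReal.ofReal s / ENNReal.ofReal ‖x‖ ^ ((d : ℝ) + α))

open Metric Module

lemma Real.rpow_one_div_rpow_neg_self {s : ℝ} (hs : 0 ≤ s) {α : ℝ} (hα : α ≠ 0) :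
    (s ^ (1 / α)) ^ (-α) = s⁻¹ := by
  rw [← Real.rpow_mul hs, show 1 / α * -α = -1 by field_simp, Real.rpow_neg_one]

lemma ENNReal.ofReal_div_ofReal_rpow {s t : ℝ} (ht : 0 < t) (p : ℝ) :
    ENNReal.ofReal s / ENNReal.ofReal t ^ p = ENNReal.ofReal s * ENNReal.ofReal (t ^ (-p)) := by
  rw [ENNReal.ofReal_rpow_of_pos ht, div_eq_mul_inv, Real.rpow_neg ht.le,
    ENNReal.ofReal_inv_of_pos (Real.rpow_pos_of_pos ht p)]

lemma Real.rpow_neg_sub_le_of_half_lt {t u : ℝ} (ht : 0 < t) (htu : t / 2 < u) (d : ℕ) {α : ℝ}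
    (hα : 0 ≤ α) (hα2 : α ≤ 2) : u ^ (-(d : ℝ) - α) ≤ 2 ^ (d + 2) * t ^ (-(d : ℝ) - α) :=
  calc u ^ (-(d : ℝ) - α) ≤ (t / 2) ^ (-(d : ℝ) - α) :=
        Real.rpow_le_rpow_of_nonpos (by positivity) htu.le (by linarith [d.cast_nonneg (α := ℝ)])
    _ = 2 ^ ((d : ℝ) + α) * t ^ (-(d : ℝ) - α) := by
        rw [Real.div_rpow ht.le zero_le_two, div_eq_mul_inv, ← Real.rpow_neg zero_le_two, mul_comm]
        ring_nf
    _ ≤ 2 ^ (d + 2) * t ^ (-(d : ℝ) - α) := by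
        gcongr
        rw [← Real.rpow_natCast]
        exact Real.rpow_le_rpow_of_exponent_le one_le_two (by push_cast; linarith)

section Tail

variable {E : Type*} [NormedAddCommGroup E] [NormedSpace ℝ E] [MeasurableSpace E] [BorelSpace E]
  (μ : Measure E)

noncomputable def tailIntegral (α R : ℝ) : ℝ≥0∞ :=
  ∫⁻ z in {z : E | R < ‖z‖}, ENNReal.ofReal (‖z‖ ^ (-(finrank ℝ E : ℝ) - α)) ∂μ

lemma tailIntegral_one_antitone {α₀ α : ℝ} (hα : α₀ ≤ α) :
    tailIntegral μ α 1 ≤ tailIntegral μ α₀ 1 :=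
  setLIntegral_mono' (measurableSet_lt measurable_const measurable_norm) fun z (hz : 1 < ‖z‖) ↦
    ENNReal.ofReal_le_ofReal (Real.rpow_le_rpow_of_exponent_le hz.le (by linarith))

variable [FiniteDimensional ℝ E] [μ.IsAddHaarMeasure]

lemma lintegral_eq_mul_lintegral_comp_smul (f : E → ℝ≥0∞) {R : ℝ} (hR : 0 < R) :
    ∫⁻ z, f z ∂μ = ENNReal.ofReal (R ^ finrank ℝ E) * ∫⁻ z, f (R • z) ∂μ := by
  have hmap := lintegral_map_equiv (μ := μ) f (Homeomorph.smulOfNeZero R hR.ne').toMeasurableEquiv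
  simp only [Homeomorph.toMeasurableEquiv_coe, Homeomorph.smulOfNeZero_apply] at hmap
  rw [← hmap, Measure.map_addHaar_smul μ hR.ne', lintegral_smul_measure, smul_eq_mul,
    abs_of_pos (by positivity), ← mul_assoc, ← ENNReal.ofReal_mul (by positivity),
    mul_inv_cancel₀ (by positivity), ENNReal.ofReal_one, one_mul]

lemma tailIntegral_eq_rpow_mul (α : ℝ) {R : ℝ} (hR : 0 < R) :
    tailIntegral μ α R = ENNReal.ofReal (R ^ (-α)) * tailIntegral μ α 1 := by
  set p : ℝ := -(finrank ℝ E : ℝ) - α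
  set g : E → ℝ≥0∞ := fun z ↦ ENNReal.ofReal (‖z‖ ^ p)
  have hscale : ∀ z : E, {z : E | R < ‖z‖}.indicator g (R • z) =
      ENNReal.ofReal (R ^ p) * {z : E | 1 < ‖z‖}.indicator g z := by
    intro z
    by_cases hz : 1 < ‖z‖
    · have hRz : R < ‖R • z‖ := by
        rw [norm_smul, Real.norm_of_nonneg hR.le]; exact lt_mul_of_one_lt_right hR hz
      rw [Set.indicator_of_mem (s := {z : E | R < ‖z‖}) hRz,
        Set.indicator_of_mem (s := {z : E | 1 < ‖z‖}) hz, ← ENNReal.ofReal_mul (by positivity)]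
      simp only [g]
      rw [norm_smul, Real.norm_of_nonneg hR.le, Real.mul_rpow hR.le (norm_nonneg z)]
    · have hRz : ¬ R < ‖R • z‖ := by
        rw [norm_smul, Real.norm_of_nonneg hR.le, not_lt]
        exact mul_le_of_le_one_right hR.le (not_lt.mp hz)
      rw [Set.indicator_of_notMem (s := {z : E | R < ‖z‖}) hRz,
        Set.indicator_of_notMem (s := {z : E | 1 < ‖z‖}) hz, mul_zero]
  have hmeas : ∀ r : ℝ, MeasurableSet {z : E | r < ‖z‖} :=
    fun r ↦ measurableSet_lt measurable_const measurable_norm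
  calc tailIntegral μ α R = ∫⁻ z, {z : E | R < ‖z‖}.indicator g z ∂μ :=
        (lintegral_indicator (hmeas R) g).symm
    _ = ENNReal.ofReal (R ^ finrank ℝ E) * ENNReal.ofReal (R ^ p) * tailIntegral μ α 1 := by
        rw [lintegral_eq_mul_lintegral_comp_smul μ _ hR, funext hscale,
          lintegral_const_mul' _ _ ENNReal.ofReal_ne_top, lintegral_indicator (hmeas 1), mul_assoc]
        rfl
    _ = ENNReal.ofReal (R ^ (-α)) * tailIntegral μ α 1 := by
        rw [← ENNReal.ofReal_mul (by positivity), ← Real.rpow_natCast, ← Real.rpow_add hR,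
          show (finrank ℝ E : ℝ) + p = -α by simp only [p]; ring]

lemma tailIntegral_one_lt_top {α : ℝ} (hα : 0 < α) : tailIntegral μ α 1 < ∞ := by
  set p : ℝ := finrank ℝ E + α
  have hp : 0 < p := add_pos_of_nonneg_of_pos (Nat.cast_nonneg _) hα
  have hpt : ∀ z ∈ {z : E | 1 < ‖z‖}, ENNReal.ofReal (‖z‖ ^ (-(finrank ℝ E : ℝ) - α)) ≤
      ENNReal.ofReal (2 ^ p) * ENNReal.ofReal ((1 + ‖z‖) ^ (-p)) := by
    intro z (hz : 1 < ‖z‖)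
    have hz0 : 0 < ‖z‖ := one_pos.trans hz
    rw [← ENNReal.ofReal_mul (by positivity), show -(finrank ℝ E : ℝ) - α = -p by ring]
    refine ENNReal.ofReal_le_ofReal ?_
    calc ‖z‖ ^ (-p) = 2 ^ p * (2 * ‖z‖) ^ (-p) := by
          rw [Real.mul_rpow zero_le_two hz0.le, ← mul_assoc, ← Real.rpow_add zero_lt_two,
            add_neg_cancel, Real.rpow_zero, one_mul]
      _ ≤ 2 ^ p * (1 + ‖z‖) ^ (-p) := by
          refine mul_le_mul_of_nonneg_left ?_ (by positivity)
          exact Real.rpow_le_rpow_of_nonpos (by positivity) (by linarith) (neg_nonpos.2 hp.le)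
  calc tailIntegral μ α 1
      ≤ ∫⁻ z in {z : E | 1 < ‖z‖}, ENNReal.ofReal (2 ^ p) * ENNReal.ofReal ((1 + ‖z‖) ^ (-p)) ∂μ :=
        setLIntegral_mono' (measurableSet_lt measurable_const measurable_norm) hpt
    _ ≤ ENNReal.ofReal (2 ^ p) * ∫⁻ z, ENNReal.ofReal ((1 + ‖z‖) ^ (-p)) ∂μ := by
        rw [← lintegral_const_mul' _ _ ENNReal.ofReal_ne_top]
        exact setLIntegral_le_lintegral _ _
    _ < ∞ := ENNReal.mul_lt_top ENNReal.ofReal_lt_top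
        (finite_integral_one_add_norm (lt_add_of_pos_right _ hα))

lemma tailIntegral_le {α₀ α R : ℝ} (hα : α₀ ≤ α) (hR : 0 < R) :
    tailIntegral μ α R ≤ ENNReal.ofReal (R ^ (-α)) * tailIntegral μ α₀ 1 := by
  rw [tailIntegral_eq_rpow_mul μ α hR]
  gcongr
  exact tailIntegral_one_antitone μ hα

end Tail

noncomputable def levyTailConst (d : ℕ) (α₀ : ℝ) : ℝ≥0∞ :=
  2 ^ (d + 2) * (volume (ball (0 : EuclideanSpace ℝ (Fin d)) 1) +
    tailIntegral (volume : Measure (EuclideanSpace ℝ (Fin d))) α₀ 1)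

section Euclidean

variable {d : ℕ} {α₀ α s : ℝ}

lemma tailIntegral_euclideanSpace (α R : ℝ) :
    tailIntegral (volume : Measure (EuclideanSpace ℝ (Fin d))) α R =
      ∫⁻ z in {z : EuclideanSpace ℝ (Fin d) | R < ‖z‖}, ENNReal.ofReal (‖z‖ ^ (-(d : ℝ) - α)) := by
  rw [tailIntegral, finrank_euclideanSpace_fin]

lemma setLIntegral_closedBall_rhoA_le (hs : 0 < s) :
    ∫⁻ y in closedBall (0 : EuclideanSpace ℝ (Fin d)) (s ^ (1 / α)), rhoA d α s y ≤
      volume (ball (0 : EuclideanSpace ℝ (Fin d)) 1) :=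
  calc ∫⁻ y in closedBall 0 (s ^ (1 / α)), rhoA d α s y
      ≤ ∫⁻ _ in closedBall (0 : EuclideanSpace ℝ (Fin d)) (s ^ (1 / α)),
          ENNReal.ofReal s ^ (-(d : ℝ) / α) := lintegral_mono fun _ ↦ min_le_left _ _
    _ = ENNReal.ofReal s ^ (-(d : ℝ) / α) * volume (closedBall (0 : EuclideanSpace ℝ (Fin d))
          (s ^ (1 / α))) := setLIntegral_const _ _
    _ = volume (ball (0 : EuclideanSpace ℝ (Fin d)) 1) := by
        rw [Measure.addHaar_closedBall _ _ (by positivity), finrank_euclideanSpace_fin, ← mul_assoc,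
          ENNReal.ofReal_rpow_of_pos hs, ← ENNReal.ofReal_mul (by positivity), ← Real.rpow_natCast,
          ← Real.rpow_mul hs.le, ← Real.rpow_add hs, show -(d : ℝ) / α + 1 / α * d = 0 by ring,
          Real.rpow_zero, ENNReal.ofReal_one, one_mul]

lemma setLIntegral_rhoA_le_tailIntegral (hα₀ : α₀ ≤ α) (hα : 0 < α) (hs : 0 < s) :
    ∫⁻ y in {y : EuclideanSpace ℝ (Fin d) | s ^ (1 / α) < ‖y‖}, rhoA d α s y ≤
      tailIntegral (volume : Measure (EuclideanSpace ℝ (Fin d))) α₀ 1 := by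
  have hr : 0 < s ^ (1 / α) := by positivity
  calc ∫⁻ y in {y : EuclideanSpace ℝ (Fin d) | s ^ (1 / α) < ‖y‖}, rhoA d α s y
      ≤ ∫⁻ y in {y : EuclideanSpace ℝ (Fin d) | s ^ (1 / α) < ‖y‖},
          ENNReal.ofReal s * ENNReal.ofReal (‖y‖ ^ (-(d : ℝ) - α)) :=
        setLIntegral_mono' (measurableSet_lt measurable_const measurable_norm) fun y hy ↦
          (min_le_right _ _).trans_eq <| by
            rw [ENNReal.ofReal_div_ofReal_rpow (hr.trans hy), neg_add']
    _ = ENNReal.ofReal s * tailIntegral volume α (s ^ (1 / α)) := by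
        rw [lintegral_const_mul' _ _ ENNReal.ofReal_ne_top, tailIntegral_euclideanSpace]
    _ ≤ ENNReal.ofReal s * (ENNReal.ofReal ((s ^ (1 / α)) ^ (-α)) *
          tailIntegral (volume : Measure (EuclideanSpace ℝ (Fin d))) α₀ 1) := by
        gcongr
        exact tailIntegral_le _ hα₀ hr
    _ = tailIntegral (volume : Measure (EuclideanSpace ℝ (Fin d))) α₀ 1 := by
        rw [Real.rpow_one_div_rpow_neg_self hs.le hα.ne', ← mul_assoc, ← ENNReal.ofReal_mul hs.le,
          mul_inv_cancel₀ hs.ne', ENNReal.ofReal_one, one_mul]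

lemma lintegral_rhoA_le (hα₀ : α₀ ≤ α) (hα : 0 < α) (hs : 0 < s) :
    ∫⁻ y, rhoA d α s y ≤
      volume (ball (0 : EuclideanSpace ℝ (Fin d)) 1) +
        tailIntegral (volume : Measure (EuclideanSpace ℝ (Fin d))) α₀ 1 := by
  have hcompl : (closedBall (0 : EuclideanSpace ℝ (Fin d)) (s ^ (1 / α)))ᶜ =
      {y | s ^ (1 / α) < ‖y‖} := by
    ext y; simp
  rw [← lintegral_add_compl _ measurableSet_closedBall, hcompl]
  exact add_le_add (setLIntegral_closedBall_rhoA_le hs)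
    (setLIntegral_rhoA_le_tailIntegral hα₀ hα hs)

lemma levyTailConst_ne_zero : levyTailConst d α₀ ≠ 0 :=
  mul_ne_zero (pow_ne_zero _ two_ne_zero)
    (add_pos_of_pos_of_nonneg (measure_ball_pos _ _ one_pos) zero_le).ne'

lemma levyTailConst_ne_top (hα₀ : 0 < α₀) : levyTailConst d α₀ ≠ ∞ :=
  ENNReal.mul_ne_top (ENNReal.pow_ne_top ENNReal.ofNat_ne_top)
    (ENNReal.add_ne_top.2 ⟨measure_ball_lt_top.ne, (tailIntegral_one_lt_top _ hα₀).ne⟩)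

lemma tailIntegral_le_levyTailConst :
    tailIntegral (volume : Measure (EuclideanSpace ℝ (Fin d))) α₀ 1 ≤ levyTailConst d α₀ :=
  le_add_self.trans (le_mul_of_one_le_left' (one_le_pow₀ one_le_two))

variable (x : EuclideanSpace ℝ (Fin d)) {R : ℝ}

lemma setLIntegral_rhoA_mul_rpow_le_of_rpow_le (hα₀ : α₀ ≤ α) (hα : 0 < α) (hs : 0 < s)
    (hR : s ^ (1 / α) ≤ R) :
    ∫⁻ z in {z : EuclideanSpace ℝ (Fin d) | R < ‖z‖},
        rhoA d α s (x + z) * ENNReal.ofReal (‖z‖ ^ (-(d : ℝ) - α)) ≤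
      ENNReal.ofReal s⁻¹ * levyTailConst d α₀ * ENNReal.ofReal s ^ (-(d : ℝ) / α) := by
  have hR0 : 0 < R := (Real.rpow_pos_of_pos hs _).trans_le hR
  have hRs : R ^ (-α) ≤ s⁻¹ := by
    rw [← Real.rpow_one_div_rpow_neg_self hs.le hα.ne']
    exact Real.rpow_le_rpow_of_nonpos (by positivity) hR (by linarith)
  calc ∫⁻ z in {z : EuclideanSpace ℝ (Fin d) | R < ‖z‖},
        rhoA d α s (x + z) * ENNReal.ofReal (‖z‖ ^ (-(d : ℝ) - α))
      ≤ ∫⁻ z in {z : EuclideanSpace ℝ (Fin d) | R < ‖z‖},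
          ENNReal.ofReal s ^ (-(d : ℝ) / α) * ENNReal.ofReal (‖z‖ ^ (-(d : ℝ) - α)) :=
        lintegral_mono fun z ↦ mul_le_mul_left (min_le_left _ _) _
    _ = ENNReal.ofReal s ^ (-(d : ℝ) / α) * tailIntegral volume α R := by
        rw [lintegral_const_mul _ (by fun_prop), tailIntegral_euclideanSpace]
    _ ≤ ENNReal.ofReal s ^ (-(d : ℝ) / α) * (ENNReal.ofReal (R ^ (-α)) * levyTailConst d α₀) := by
        gcongr
        exact (tailIntegral_le _ hα₀ hR0).trans (by gcongr; exact tailIntegral_le_levyTailConst)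
    _ ≤ ENNReal.ofReal s ^ (-(d : ℝ) / α) * (ENNReal.ofReal s⁻¹ * levyTailConst d α₀) := by
        gcongr
    _ = ENNReal.ofReal s⁻¹ * levyTailConst d α₀ * ENNReal.ofReal s ^ (-(d : ℝ) / α) := by ring

lemma setLIntegral_rhoA_mul_rpow_le_of_half_norm_le (hα₀ : α₀ ≤ α) (hα : 0 < α) (hα2 : α ≤ 2)
    (hs : 0 < s) (hR : ‖x‖ / 2 ≤ R) :
    ∫⁻ z in {z : EuclideanSpace ℝ (Fin d) | R < ‖z‖},
        rhoA d α s (x + z) * ENNReal.ofReal (‖z‖ ^ (-(d : ℝ) - α)) ≤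
      ENNReal.ofReal s⁻¹ * levyTailConst d α₀ *
        (ENNReal.ofReal s / ENNReal.ofReal ‖x‖ ^ ((d : ℝ) + α)) := by
  rcases (norm_nonneg x).eq_or_lt with hx | hx
  · rw [← hx, ENNReal.ofReal_zero, ENNReal.zero_rpow_of_pos (by positivity),
      ENNReal.div_zero (ENNReal.ofReal_pos.2 hs).ne',
      ENNReal.mul_top (mul_ne_zero (ENNReal.ofReal_pos.2 (inv_pos.2 hs)).ne' levyTailConst_ne_zero)]
    exact le_top
  set c : ℝ≥0∞ := ENNReal.ofReal (2 ^ (d + 2) * ‖x‖ ^ (-(d : ℝ) - α))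
  have hs1 : ENNReal.ofReal s⁻¹ * ENNReal.ofReal s = 1 := by
    rw [← ENNReal.ofReal_mul (inv_nonneg.2 hs.le), inv_mul_cancel₀ hs.ne', ENNReal.ofReal_one]
  calc ∫⁻ z in {z : EuclideanSpace ℝ (Fin d) | R < ‖z‖},
        rhoA d α s (x + z) * ENNReal.ofReal (‖z‖ ^ (-(d : ℝ) - α))
      ≤ ∫⁻ z in {z : EuclideanSpace ℝ (Fin d) | R < ‖z‖}, rhoA d α s (x + z) * c :=
        setLIntegral_mono' (measurableSet_lt measurable_const measurable_norm) fun z hz ↦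
          mul_le_mul_right (ENNReal.ofReal_le_ofReal <|
            Real.rpow_neg_sub_le_of_half_lt hx (hR.trans_lt hz) d hα.le hα2) _
    _ ≤ (∫⁻ z, rhoA d α s (x + z)) * c := by
        rw [lintegral_mul_const' _ _ ENNReal.ofReal_ne_top]
        gcongr
        exact Measure.restrict_le_self
    _ ≤ (volume (ball (0 : EuclideanSpace ℝ (Fin d)) 1) +
          tailIntegral (volume : Measure (EuclideanSpace ℝ (Fin d))) α₀ 1) * c := by
        rw [lintegral_add_left_eq_self]
        gcongr
        exact lintegral_rhoA_le hα₀ hα hs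
    _ = ENNReal.ofReal s⁻¹ * levyTailConst d α₀ *
          (ENNReal.ofReal s / ENNReal.ofReal ‖x‖ ^ ((d : ℝ) + α)) := by
        simp only [c]
        rw [ENNReal.ofReal_div_ofReal_rpow hx, neg_add', levyTailConst,
          ENNReal.ofReal_mul (by positivity), ENNReal.ofReal_pow zero_le_two, ENNReal.ofReal_ofNat]
        conv_lhs => rw [← one_mul (_ * _), ← hs1]
        ring

lemma setLIntegral_rhoA_mul_rpow_le (hα₀ : α₀ ≤ α) (hα : 0 < α) (hα2 : α ≤ 2) (hs : 0 < s) :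
    ∫⁻ z in {z : EuclideanSpace ℝ (Fin d) | max (s ^ (1 / α)) (‖x‖ / 2) < ‖z‖},
        rhoA d α s (x + z) * ENNReal.ofReal (‖z‖ ^ (-(d : ℝ) - α)) ≤
      ENNReal.ofReal s⁻¹ * levyTailConst d α₀ * rhoA d α s x := by
  rw [rhoA, mul_min]
  exact le_min (setLIntegral_rhoA_mul_rpow_le_of_rpow_le x hα₀ hα hs (le_max_left _ _))
    (setLIntegral_rhoA_mul_rpow_le_of_half_norm_le x hα₀ hα hα2 hs (le_max_right _ _))

end Euclidean

theorem stmt_17_general (d : ℕ) (α₀ : ℝ) (hα₀ : α₀ ∈ Set.Ioo (0 : ℝ) 2) :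
    ∃ c : ℝ, 0 < c ∧ ∀ α ∈ Set.Ico α₀ (2 : ℝ), ∀ s : ℝ, 0 < s →
      ∀ x : EuclideanSpace ℝ (Fin d),
        (∫⁻ z in {z : EuclideanSpace ℝ (Fin d) | max (s ^ (1 / α)) (‖x‖ / 2) < ‖z‖},
            rhoA d α s (x + z) * ENNReal.ofReal ((2 - α) * ‖z‖ ^ (-(d : ℝ) - α)))
          ≤ ENNReal.ofReal (c * (2 - α) * s⁻¹) * rhoA d α s x := by
  have hK := levyTailConst_ne_top (d := d) hα₀.1
  refine ⟨(levyTailConst d α₀).toReal, ENNReal.toReal_pos levyTailConst_ne_zero hK, ?_⟩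
  rintro α ⟨hα₀α, hα2⟩ s hs x
  calc (∫⁻ z in {z : EuclideanSpace ℝ (Fin d) | max (s ^ (1 / α)) (‖x‖ / 2) < ‖z‖},
          rhoA d α s (x + z) * ENNReal.ofReal ((2 - α) * ‖z‖ ^ (-(d : ℝ) - α)))
      = ENNReal.ofReal (2 - α) *
          ∫⁻ z in {z : EuclideanSpace ℝ (Fin d) | max (s ^ (1 / α)) (‖x‖ / 2) < ‖z‖},
            rhoA d α s (x + z) * ENNReal.ofReal (‖z‖ ^ (-(d : ℝ) - α)) := by
        rw [← lintegral_const_mul' _ _ ENNReal.ofReal_ne_top]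
        refine lintegral_congr fun z ↦ ?_
        rw [ENNReal.ofReal_mul' (by positivity)]
        ring
    _ ≤ ENNReal.ofReal (2 - α) * (ENNReal.ofReal s⁻¹ * levyTailConst d α₀ * rhoA d α s x) := by
        gcongr
        exact setLIntegral_rhoA_mul_rpow_le x hα₀α (hα₀.1.trans_le hα₀α) hα2.le hs
    _ = ENNReal.ofReal ((levyTailConst d α₀).toReal * (2 - α) * s⁻¹) * rhoA d α s x := by
        rw [ENNReal.ofReal_mul' (by positivity), ENNReal.ofReal_mul ENNReal.toReal_nonneg,
          ENNReal.ofReal_toReal hK]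
        ring

/-- For `α ∈ [α₀,2)` there is `c = c(d,α₀) > 0` with
`∫_{|z| > max(s^{1/α}, |x|/2)} ϱ_α(s, x+z) (2−α)|z|^{-d-α} dz
  ≤ c (2−α) s^{-1} ϱ_α(s,x)`. -/
theorem stmt_17 (d : ℕ) (hd : 1 ≤ d) (α₀ : ℝ) (hα₀ : α₀ ∈ Set.Ioo (0 : ℝ) 2) :
    ∃ c : ℝ, 0 < c ∧ ∀ α ∈ Set.Ico α₀ (2 : ℝ), ∀ s : ℝ, 0 < s →
      ∀ x : EuclideanSpace ℝ (Fin d),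
        (∫⁻ z in {z : EuclideanSpace ℝ (Fin d) | max (s ^ (1 / α)) (‖x‖ / 2) < ‖z‖},
            rhoA d α s (x + z) * ENNReal.ofReal ((2 - α) * ‖z‖ ^ (-(d : ℝ) - α)))
          ≤ ENNReal.ofReal (c * (2 - α) * s⁻¹) * rhoA d α s x :=
  stmt_17_general d α₀ hα₀
end
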